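/- arXiv:2502.06447 — 7 statements merged into one kernel-verified Lean document; each statement's English description precedes it below -/
import Mathlib

section
/- For any real biquadratic tensor A ∈ ℝ^{m×n×m×n} with m, n ≥ 2, there exist unit vectors x ∈ ℝ^m, y ∈ ℝ^n and a real number λ satisfying the M-eigenvalue equations; i.e., every biquadratic tensor has at least one M-eigenvalue. -/
/-!
Minimize `f x y = bqForm A x y` over the product of the two unit spheres, which is compact.
At a minimizer `(x, y)`, the vector `x` minimizes `x ↦ xᵀ M x` on its sphere, where
`M i₁ i₂ = ∑ j₁ j₂, A i₁ j₁ i₂ j₂ y j₁ y j₂`. Hence `M + Mᵀ - 2 f(x, y) • 1` is positive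
semidefinite and its quadratic form vanishes at `x`, so it kills `x`: this is the first
eigen-equation with `λ = f(x, y)`. The second one follows in the same way from minimality in `y`.
-/

noncomputable section
open Finset

/-- The biquadratic form of a biquadratic tensor. -/
def bqForm {m n : ℕ} (A : Fin m → Fin n → Fin m → Fin n → ℝ)
    (x : Fin m → ℝ) (y : Fin n → ℝ) : ℝ :=
  ∑ i1, ∑ j1, ∑ i2, ∑ j2, A i1 j1 i2 j2 * x i1 * y j1 * x i2 * y j2

/-- (λ, x, y) is an M-eigenpair of the biquadratic tensor A. -/
def IsMEigenpair {m n : ℕ} (A : Fin m → Fin n → Fin m → Fin n → ℝ)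
    (lam : ℝ) (x : Fin m → ℝ) (y : Fin n → ℝ) : Prop :=
  (∑ i, x i ^ 2 = 1) ∧ (∑ j, y j ^ 2 = 1) ∧
  (∀ i, (∑ i1, ∑ j1, ∑ j2, A i1 j1 i j2 * x i1 * y j1 * y j2)
      + (∑ i2, ∑ j1, ∑ j2, A i j1 i2 j2 * y j1 * x i2 * y j2) = 2 * lam * x i) ∧
  (∀ j, (∑ i1, ∑ i2, ∑ j1, A i1 j1 i2 j * x i1 * y j1 * x i2)
      + (∑ i1, ∑ i2, ∑ j2, A i1 j i2 j2 * x i1 * x i2 * y j2) = 2 * lam * y j)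

/-- λ is an M-eigenvalue of A. -/
def IsMEigenvalue {m n : ℕ} (A : Fin m → Fin n → Fin m → Fin n → ℝ) (lam : ℝ) : Prop :=
  ∃ x y, IsMEigenpair A lam x y

/-- A is a positive semi-definite biquadratic tensor. -/
def BQPosSemidef {m n : ℕ} (A : Fin m → Fin n → Fin m → Fin n → ℝ) : Prop :=
  ∀ x y, 0 ≤ bqForm A x y

/-- A is a positive definite biquadratic tensor. -/
def BQPosDef {m n : ℕ} (A : Fin m → Fin n → Fin m → Fin n → ℝ) : Prop :=
  ∀ x y, (∑ i, x i ^ 2 = 1) → (∑ j, y j ^ 2 = 1) → 0 < bqForm A x y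

open Matrix

section QuadraticForm

variable {ι : Type*} [Fintype ι]

def unitSphere (ι : Type*) [Fintype ι] : Set (ι → ℝ) := {x | x ⬝ᵥ x = 1}

theorem mem_unitSphere {x : ι → ℝ} : x ∈ unitSphere ι ↔ ∑ i, x i ^ 2 = 1 := by
  simp only [unitSphere, Set.mem_ofPred_eq, dotProduct, sq]

theorem isCompact_unitSphere : IsCompact (unitSphere ι) := by
  refine Metric.isCompact_of_isClosed_isBounded (isClosed_eq (by fun_prop) continuous_const)
    ((Metric.isBounded_closedBall (x := 0) (r := 1)).subset fun x hx => ?_)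
  rw [mem_closedBall_zero_iff, pi_norm_le_iff_of_nonneg zero_le_one]
  intro i
  rw [Real.norm_eq_abs, ← sq_le_one_iff_abs_le_one, sq]
  exact hx ▸ Finset.single_le_sum (fun j _ => mul_self_nonneg (x j)) (Finset.mem_univ i)

theorem unitSphere_nonempty [Nonempty ι] : (unitSphere ι).Nonempty := by
  classical
  obtain ⟨i⟩ := ‹Nonempty ι›
  exact ⟨Pi.single i 1, by simp [unitSphere]⟩

theorem mul_dotProduct_self_le_of_forall_unitSphere {M : Matrix ι ι ℝ} {c : ℝ}
    (h : ∀ x ∈ unitSphere ι, c ≤ x ⬝ᵥ M *ᵥ x) (x : ι → ℝ) :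
    c * (x ⬝ᵥ x) ≤ x ⬝ᵥ M *ᵥ x := by
  rcases eq_or_ne x 0 with rfl | hx
  · simp
  have hpos : 0 < x ⬝ᵥ x := lt_of_le_of_ne (Finset.sum_nonneg fun i _ => mul_self_nonneg (x i))
    (Ne.symm (dotProduct_self_eq_zero.not.mpr hx))
  set r := Real.sqrt (x ⬝ᵥ x)
  have hr2 : r * r = x ⬝ᵥ x := Real.mul_self_sqrt hpos.le
  have hunit : r⁻¹ • x ∈ unitSphere ι := by
    rw [unitSphere, Set.mem_ofPred_eq, smul_dotProduct, dotProduct_smul, smul_eq_mul,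
      smul_eq_mul, ← mul_assoc, ← mul_inv, hr2]
    exact inv_mul_cancel₀ hpos.ne'
  have := h _ hunit
  rwa [mulVec_smul, dotProduct_smul, smul_dotProduct, smul_eq_mul, smul_eq_mul, ← mul_assoc,
    ← mul_inv, hr2, ← div_eq_inv_mul, le_div_iff₀ hpos] at this

theorem mulVec_add_transpose_eq_smul_of_isMinOn {M : Matrix ι ι ℝ} {x₀ : ι → ℝ}
    (hx₀ : x₀ ∈ unitSphere ι) (hmin : IsMinOn (fun x => x ⬝ᵥ M *ᵥ x) (unitSphere ι) x₀) :
    (M + Mᵀ) *ᵥ x₀ = (2 * (x₀ ⬝ᵥ M *ᵥ x₀)) • x₀ := by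
  classical
  set c := x₀ ⬝ᵥ M *ᵥ x₀
  have hquad (x : ι → ℝ) :
      star x ⬝ᵥ (M + Mᵀ - (2 * c) • 1) *ᵥ x = 2 * (x ⬝ᵥ M *ᵥ x - c * (x ⬝ᵥ x)) := by
    rw [star_trivial, sub_mulVec, add_mulVec, dotProduct_sub, dotProduct_add, smul_mulVec,
      one_mulVec, mulVec_transpose, dotProduct_smul, dotProduct_comm x (x ᵥ* M),
      ← dotProduct_mulVec, smul_eq_mul]
    ring
  have hpsd : (M + Mᵀ - (2 * c) • 1).PosSemidef := by
    refine .of_dotProduct_mulVec_nonneg ?_ fun x => ?_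
    · simp [IsHermitian, conjTranspose_eq_transpose_of_trivial, transpose_sub, add_comm]
    · rw [hquad]
      have := mul_dotProduct_self_le_of_forall_unitSphere (fun x hx => hmin hx) x
      linarith
  have hker := (hpsd.dotProduct_mulVec_zero_iff x₀).mp
    (by rw [hquad, hx₀, mul_one, sub_self, mul_zero])
  rwa [sub_mulVec, smul_mulVec, one_mulVec, sub_eq_zero] at hker

end QuadraticForm

section Biquadratic

variable {m n : ℕ} (A : Fin m → Fin n → Fin m → Fin n → ℝ)

def bqMatrixX (y : Fin n → ℝ) : Matrix (Fin m) (Fin m) ℝ :=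
  of fun i1 i2 => ∑ j1, ∑ j2, A i1 j1 i2 j2 * y j1 * y j2

def bqMatrixY (x : Fin m → ℝ) : Matrix (Fin n) (Fin n) ℝ :=
  of fun j1 j2 => ∑ i1, ∑ i2, A i1 j1 i2 j2 * x i1 * x i2

theorem bqForm_eq_dotProduct_bqMatrixX (x : Fin m → ℝ) (y : Fin n → ℝ) :
    bqForm A x y = x ⬝ᵥ bqMatrixX A y *ᵥ x := by
  simp only [bqForm, bqMatrixX, dotProduct, mulVec, of_apply, Finset.mul_sum, Finset.sum_mul]
  refine Finset.sum_congr rfl fun i1 _ => Finset.sum_comm.trans ?_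
  ac_rfl

theorem bqForm_eq_dotProduct_bqMatrixY (x : Fin m → ℝ) (y : Fin n → ℝ) :
    bqForm A x y = y ⬝ᵥ bqMatrixY A x *ᵥ y := by
  simp only [bqForm, bqMatrixY, dotProduct, mulVec, of_apply, Finset.mul_sum, Finset.sum_mul]
  rw [Finset.sum_comm]
  refine Finset.sum_congr rfl fun j1 _ => Finset.sum_comm_cycle.trans ?_
  ac_rfl

theorem sum_add_sum_eq_add_transpose_bqMatrixX_mulVec (x : Fin m → ℝ) (y : Fin n → ℝ)
    (i : Fin m) :
    (∑ i1, ∑ j1, ∑ j2, A i1 j1 i j2 * x i1 * y j1 * y j2) +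
        (∑ i2, ∑ j1, ∑ j2, A i j1 i2 j2 * y j1 * x i2 * y j2) =
      ((bqMatrixX A y + (bqMatrixX A y)ᵀ) *ᵥ x) i := by
  rw [add_mulVec, Pi.add_apply, add_comm]
  congr 1 <;> simp only [mulVec, dotProduct, bqMatrixX, transpose_apply, of_apply, Finset.sum_mul]
    <;> ac_rfl

theorem sum_add_sum_eq_add_transpose_bqMatrixY_mulVec (x : Fin m → ℝ) (y : Fin n → ℝ)
    (j : Fin n) :
    (∑ i1, ∑ i2, ∑ j1, A i1 j1 i2 j * x i1 * y j1 * x i2) +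
        (∑ i1, ∑ i2, ∑ j2, A i1 j i2 j2 * x i1 * x i2 * y j2) =
      ((bqMatrixY A x + (bqMatrixY A x)ᵀ) *ᵥ y) j := by
  rw [add_mulVec, Pi.add_apply, add_comm]
  congr 1 <;> simp only [mulVec, dotProduct, bqMatrixY, transpose_apply, of_apply, Finset.sum_mul]
    <;> rw [Finset.sum_comm_cycle (s := (univ : Finset (Fin m)))]
  ac_rfl

theorem exists_isMinOn_bqForm [NeZero m] [NeZero n] :
    ∃ x ∈ unitSphere (Fin m), ∃ y ∈ unitSphere (Fin n),
      IsMinOn (bqForm A · y) (unitSphere (Fin m)) x ∧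
        IsMinOn (bqForm A x ·) (unitSphere (Fin n)) y := by
  obtain ⟨⟨x, y⟩, ⟨hx, hy⟩, hmin⟩ :=
    (isCompact_unitSphere.prod isCompact_unitSphere).exists_isMinOn
      (unitSphere_nonempty.prod unitSphere_nonempty)
      (Continuous.continuousOn (f := fun p => bqForm A p.1 p.2) (by unfold bqForm; fun_prop))
  exact ⟨x, hx, y, hy, isMinOn_iff.mpr fun x' hx' => isMinOn_iff.mp hmin (x', y) ⟨hx', hy⟩,
    isMinOn_iff.mpr fun y' hy' => isMinOn_iff.mp hmin (x, y') ⟨hx, hy'⟩⟩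

end Biquadratic

/-- Every biquadratic tensor has at least one M-eigenvalue. -/
theorem biquadratic_has_M_eigenvalue {m n : ℕ} (hm : 2 ≤ m) (hn : 2 ≤ n)
    (A : Fin m → Fin n → Fin m → Fin n → ℝ) :
    ∃ (lam : ℝ) (x : Fin m → ℝ) (y : Fin n → ℝ), IsMEigenpair A lam x y := by
  have : NeZero m := ⟨by omega⟩
  have : NeZero n := ⟨by omega⟩
  obtain ⟨x, hx, y, hy, hminX, hminY⟩ := exists_isMinOn_bqForm A
  have hX := mulVec_add_transpose_eq_smul_of_isMinOn hx
    (by simpa only [bqForm_eq_dotProduct_bqMatrixX] using hminX)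
  have hY := mulVec_add_transpose_eq_smul_of_isMinOn hy
    (by simpa only [bqForm_eq_dotProduct_bqMatrixY] using hminY)
  rw [← bqForm_eq_dotProduct_bqMatrixX] at hX
  rw [← bqForm_eq_dotProduct_bqMatrixY] at hY
  refine ⟨bqForm A x y, x, y, mem_unitSphere.mp hx, mem_unitSphere.mp hy,
    fun i => ?_, fun j => ?_⟩
  · rw [sum_add_sum_eq_add_transpose_bqMatrixX_mulVec, hX, Pi.smul_apply, smul_eq_mul]
  · rw [sum_add_sum_eq_add_transpose_bqMatrixY_mulVec, hY, Pi.smul_apply, smul_eq_mul]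
end
end

section
/- A biquadratic tensor A ∈ ℝ^{m×n×m×n} is positive semi-definite (i.e., f(x,y) = Σ a_{i1 j1 i2 j2} x_{i1} y_{j1} x_{i2} y_{j2} ≥ 0 for all x ∈ ℝ^m, y ∈ ℝ^n) if and only if all of its M-eigenvalues are nonnegative. -/
noncomputable section
open Finset

lemma lin_quad_zero (a b : ℝ) (h : ∀ t : ℝ, 0 ≤ a * t + b * t ^ 2) : a = 0 := by
  have h0 := h (-a / (b ^ 2 + 1))
  have hb : (0:ℝ) < b ^ 2 + 1 := by positivity
  by_contra ha
  have ha2 : 0 < a ^ 2 := by positivity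
  have h1 : a ^ 2 * (b - b ^ 2 - 1) < 0 := by nlinarith [sq_nonneg (b - 1)]
  have hexp : a * (-a / (b ^ 2 + 1)) + b * (-a / (b ^ 2 + 1)) ^ 2
      = a ^ 2 * (b - b ^ 2 - 1) / (b ^ 2 + 1) ^ 2 := by field_simp; ring
  rw [hexp] at h0
  have h2 := div_neg_of_neg_of_pos h1 (by positivity : (0:ℝ) < (b ^ 2 + 1) ^ 2)
  linarith

def qf {k : ℕ} (S : Fin k → Fin k → ℝ) (v : Fin k → ℝ) : ℝ :=
  ∑ i1, ∑ i2, S i1 i2 * v i1 * v i2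

lemma qf_expand {k : ℕ} (S : Fin k → Fin k → ℝ) (x v : Fin k → ℝ) (t : ℝ) :
    qf S (fun i => x i + t * v i)
      = qf S x + t * (∑ i, ((∑ i1, S i1 i * x i1) + (∑ i2, S i i2 * x i2)) * v i)
        + t ^ 2 * qf S v := by
  unfold qf
  have h : ∀ i1 i2 : Fin k, S i1 i2 * (x i1 + t * v i1) * (x i2 + t * v i2)
      = S i1 i2 * x i1 * x i2
        + t * (S i1 i2 * x i1 * v i2 + S i1 i2 * x i2 * v i1)
        + t ^ 2 * (S i1 i2 * v i1 * v i2) := by intro i1 i2; ring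
  simp_rw [h, Finset.sum_add_distrib, ← Finset.mul_sum]
  have hmid : (∑ i : Fin k, ∑ i1 : Fin k, (S i i1 * x i * v i1 + S i i1 * x i1 * v i))
      = ∑ i : Fin k, ((∑ i1, S i1 i * x i1) + (∑ i2, S i i2 * x i2)) * v i := by
    have hper : ∀ i : Fin k, ((∑ i1, S i1 i * x i1) + (∑ i2, S i i2 * x i2)) * v i
        = (∑ i1, S i1 i * x i1 * v i) + (∑ i2, S i i2 * x i2 * v i) := by
      intro i; rw [add_mul, Finset.sum_mul, Finset.sum_mul]
    simp_rw [hper, Finset.sum_add_distrib]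
    congr 1
    exact Finset.sum_comm
  rw [hmid]

lemma sq_sum_expand {k : ℕ} (x v : Fin k → ℝ) (t : ℝ) :
    (∑ i, (x i + t * v i) ^ 2)
      = (∑ i, x i ^ 2) + t * (2 * ∑ i, x i * v i) + t ^ 2 * ∑ i, v i ^ 2 := by
  have h : ∀ i : Fin k, (x i + t * v i) ^ 2
      = x i ^ 2 + t * (2 * (x i * v i)) + t ^ 2 * v i ^ 2 := by intro i; ring
  simp_rw [h, Finset.sum_add_distrib, ← Finset.mul_sum]

lemma qf_scale {k : ℕ} (S : Fin k → Fin k → ℝ) (v : Fin k → ℝ) (c : ℝ) :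
    qf S (fun i => c * v i) = c ^ 2 * qf S v := by
  unfold qf
  have h : ∀ i1 i2 : Fin k, S i1 i2 * (c * v i1) * (c * v i2)
      = c ^ 2 * (S i1 i2 * v i1 * v i2) := by intro i1 i2; ring
  simp_rw [h, ← Finset.mul_sum]

lemma qf_min_of_sphere {k : ℕ} (S : Fin k → Fin k → ℝ) (μ : ℝ)
    (h : ∀ v : Fin k → ℝ, (∑ i, v i ^ 2 = 1) → μ ≤ qf S v) :
    ∀ v : Fin k → ℝ, μ * (∑ i, v i ^ 2) ≤ qf S v := by
  intro v
  rcases eq_or_lt_of_le (Finset.sum_nonneg fun i _ => sq_nonneg (v i)) with hr | hr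
  · have hv : ∀ i, v i = 0 := by
      intro i
      have := (Finset.sum_eq_zero_iff_of_nonneg (fun i _ => sq_nonneg (v i))).mp hr.symm
      have := this i (Finset.mem_univ i)
      exact pow_eq_zero_iff (by norm_num) |>.mp this
    have : qf S v = 0 := by
      unfold qf
      simp [hv]
    rw [this, ← hr, mul_zero]
  · set r := ∑ i, v i ^ 2 with hrdef
    have hsr : Real.sqrt r > 0 := Real.sqrt_pos.mpr hr
    set c := (Real.sqrt r)⁻¹ with hcdef
    have hc2 : c ^ 2 = r⁻¹ := by
      rw [hcdef, ← Real.sqrt_inv, Real.sq_sqrt (by positivity)]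
    have hunit : ∑ i, (c * v i) ^ 2 = 1 := by
      have : ∀ i, (c * v i) ^ 2 = c ^ 2 * v i ^ 2 := fun i => by ring
      simp_rw [this, ← Finset.mul_sum, hc2]
      exact inv_mul_cancel₀ (ne_of_gt hr)
    have := h (fun i => c * v i) hunit
    rw [qf_scale, hc2] at this
    calc μ * r ≤ (r⁻¹ * qf S v) * r := by nlinarith
      _ = qf S v := by field_simp

lemma qf_min_eigen {k : ℕ} (S : Fin k → Fin k → ℝ) (x : Fin k → ℝ) (μ : ℝ)
    (hx : ∑ i, x i ^ 2 = 1) (hq : qf S x = μ)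
    (hmin : ∀ v : Fin k → ℝ, μ * (∑ i, v i ^ 2) ≤ qf S v) :
    ∀ i, (∑ i1, S i1 i * x i1) + (∑ i2, S i i2 * x i2) = 2 * μ * x i := by
  have key : ∀ v : Fin k → ℝ,
      ∑ i, (((∑ i1, S i1 i * x i1) + (∑ i2, S i i2 * x i2)) - 2 * μ * x i) * v i = 0 := by
    intro v
    apply lin_quad_zero _ (qf S v - μ * ∑ i, v i ^ 2)
    intro t
    have h1 := hmin (fun i => x i + t * v i)
    rw [qf_expand, sq_sum_expand, hx, hq] at h1
    have hexp : ∑ i, (((∑ i1, S i1 i * x i1) + (∑ i2, S i i2 * x i2)) - 2 * μ * x i) * v i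
        = (∑ i, ((∑ i1, S i1 i * x i1) + (∑ i2, S i i2 * x i2)) * v i)
          - 2 * μ * ∑ i, x i * v i := by
      simp_rw [sub_mul, Finset.sum_sub_distrib, mul_assoc, ← Finset.mul_sum]
    rw [hexp]
    nlinarith [h1]
  intro i
  have := key (Pi.single i 1)
  simp only [Pi.single_apply, mul_ite, mul_one, mul_zero, Finset.sum_ite_eq',
    Finset.mem_univ, if_true] at this
  linarith

lemma bq_as_qf_x {m n : ℕ} (A : Fin m → Fin n → Fin m → Fin n → ℝ)
    (y : Fin n → ℝ) (x : Fin m → ℝ) :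
    qf (fun i1 i2 => ∑ j1, ∑ j2, A i1 j1 i2 j2 * y j1 * y j2) x = bqForm A x y := by
  unfold qf bqForm
  simp_rw [Finset.sum_mul]
  refine Finset.sum_congr rfl fun i1 _ => ?_
  rw [Finset.sum_comm]
  exact Finset.sum_congr rfl fun j1 _ => Finset.sum_congr rfl fun i2 _ =>
    Finset.sum_congr rfl fun j2 _ => by ring

lemma sum4_reorder {α β γ δ : Type*} [Fintype α] [Fintype β] [Fintype γ] [Fintype δ]
    (f : α → β → γ → δ → ℝ) :
    ∑ b, ∑ d, ∑ a, ∑ c, f a b c d = ∑ a, ∑ b, ∑ c, ∑ d, f a b c d := by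
  calc ∑ b, ∑ d, ∑ a, ∑ c, f a b c d
      = ∑ b, ∑ a, ∑ d, ∑ c, f a b c d :=
        Finset.sum_congr rfl fun b _ => Finset.sum_comm
    _ = ∑ a, ∑ b, ∑ d, ∑ c, f a b c d := Finset.sum_comm
    _ = ∑ a, ∑ b, ∑ c, ∑ d, f a b c d :=
        Finset.sum_congr rfl fun a _ => Finset.sum_congr rfl fun b _ => Finset.sum_comm

lemma bq_as_qf_y {m n : ℕ} (A : Fin m → Fin n → Fin m → Fin n → ℝ)
    (x : Fin m → ℝ) (y : Fin n → ℝ) :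
    qf (fun j1 j2 => ∑ i1, ∑ i2, A i1 j1 i2 j2 * x i1 * x i2) y = bqForm A x y := by
  unfold qf bqForm
  simp_rw [Finset.sum_mul]
  rw [← sum4_reorder (fun i1 j1 i2 j2 => A i1 j1 i2 j2 * x i1 * y j1 * x i2 * y j2)]
  exact Finset.sum_congr rfl fun j1 _ => Finset.sum_congr rfl fun j2 _ =>
    Finset.sum_congr rfl fun i1 _ => Finset.sum_congr rfl fun i2 _ => by ring

lemma sum3_rotate {α β γ : Type*} [Fintype α] [Fintype β] [Fintype γ]
    (f : α → β → γ → ℝ) :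
    ∑ c, ∑ a, ∑ b, f a b c = ∑ a, ∑ b, ∑ c, f a b c := by
  calc ∑ c, ∑ a, ∑ b, f a b c
      = ∑ a, ∑ c, ∑ b, f a b c := Finset.sum_comm
    _ = ∑ a, ∑ b, ∑ c, f a b c := Finset.sum_congr rfl fun a _ => Finset.sum_comm

lemma Sx_left {m n : ℕ} (A : Fin m → Fin n → Fin m → Fin n → ℝ)
    (x : Fin m → ℝ) (y : Fin n → ℝ) (i : Fin m) :
    (∑ i1, (∑ j1, ∑ j2, A i1 j1 i j2 * y j1 * y j2) * x i1)
      = ∑ i1, ∑ j1, ∑ j2, A i1 j1 i j2 * x i1 * y j1 * y j2 := by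
  simp_rw [Finset.sum_mul]
  exact Finset.sum_congr rfl fun i1 _ => Finset.sum_congr rfl fun j1 _ =>
    Finset.sum_congr rfl fun j2 _ => by ring

lemma Sx_right {m n : ℕ} (A : Fin m → Fin n → Fin m → Fin n → ℝ)
    (x : Fin m → ℝ) (y : Fin n → ℝ) (i : Fin m) :
    (∑ i2, (∑ j1, ∑ j2, A i j1 i2 j2 * y j1 * y j2) * x i2)
      = ∑ i2, ∑ j1, ∑ j2, A i j1 i2 j2 * y j1 * x i2 * y j2 := by
  simp_rw [Finset.sum_mul]
  exact Finset.sum_congr rfl fun i2 _ => Finset.sum_congr rfl fun j1 _ =>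
    Finset.sum_congr rfl fun j2 _ => by ring

lemma Sy_left {m n : ℕ} (A : Fin m → Fin n → Fin m → Fin n → ℝ)
    (x : Fin m → ℝ) (y : Fin n → ℝ) (j : Fin n) :
    (∑ j1, (∑ i1, ∑ i2, A i1 j1 i2 j * x i1 * x i2) * y j1)
      = ∑ i1, ∑ i2, ∑ j1, A i1 j1 i2 j * x i1 * y j1 * x i2 := by
  simp_rw [Finset.sum_mul]
  rw [← sum3_rotate (fun i1 i2 j1 => A i1 j1 i2 j * x i1 * y j1 * x i2)]
  exact Finset.sum_congr rfl fun j1 _ => Finset.sum_congr rfl fun i1 _ =>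
    Finset.sum_congr rfl fun i2 _ => by ring

lemma Sy_right {m n : ℕ} (A : Fin m → Fin n → Fin m → Fin n → ℝ)
    (x : Fin m → ℝ) (y : Fin n → ℝ) (j : Fin n) :
    (∑ j2, (∑ i1, ∑ i2, A i1 j i2 j2 * x i1 * x i2) * y j2)
      = ∑ i1, ∑ i2, ∑ j2, A i1 j i2 j2 * x i1 * x i2 * y j2 := by
  simp_rw [Finset.sum_mul]
  rw [← sum3_rotate (fun i1 i2 j2 => A i1 j i2 j2 * x i1 * x i2 * y j2)]

lemma qf_double {k : ℕ} (S : Fin k → Fin k → ℝ) (x : Fin k → ℝ) :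
    ∑ i, ((∑ i1, S i1 i * x i1) + (∑ i2, S i i2 * x i2)) * x i = 2 * qf S x := by
  have hper : ∀ i, ((∑ i1, S i1 i * x i1) + (∑ i2, S i i2 * x i2)) * x i
      = (∑ i1, S i1 i * x i1 * x i) + (∑ i2, S i i2 * x i2 * x i) := by
    intro i; rw [add_mul, Finset.sum_mul, Finset.sum_mul]
  simp_rw [hper, Finset.sum_add_distrib]
  unfold qf
  rw [two_mul]
  congr 1
  · rw [Finset.sum_comm]
  · exact Finset.sum_congr rfl fun i _ => Finset.sum_congr rfl fun i2 _ => by ring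

lemma isCompact_sph (k : ℕ) : IsCompact {v : Fin k → ℝ | ∑ i, v i ^ 2 = 1} := by
  apply Metric.isCompact_of_isClosed_isBounded
  · exact isClosed_eq (by fun_prop) continuous_const
  · apply (Metric.isBounded_closedBall (x := (0 : Fin k → ℝ)) (r := 1)).subset
    intro v hv
    simp only [Metric.mem_closedBall, dist_zero_right]
    rw [pi_norm_le_iff_of_nonneg zero_le_one]
    intro i
    rw [Real.norm_eq_abs, ← Real.sqrt_one]
    have h1 : v i ^ 2 ≤ 1 := by
      rw [← hv]
      exact Finset.single_le_sum (fun j _ => sq_nonneg (v j)) (Finset.mem_univ i)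
    nlinarith [abs_nonneg (v i), sq_abs (v i), Real.sq_sqrt (zero_le_one (α := ℝ)),
      Real.sqrt_nonneg (1:ℝ)]

lemma bq_continuous {m n : ℕ} (A : Fin m → Fin n → Fin m → Fin n → ℝ) :
    Continuous fun p : (Fin m → ℝ) × (Fin n → ℝ) => bqForm A p.1 p.2 := by
  unfold bqForm
  fun_prop

lemma sum_single_sq (k : ℕ) (hk : 0 < k) :
    ∑ i : Fin k, (if i = ⟨0, hk⟩ then (1:ℝ) else 0) ^ 2 = 1 := by
  simp [apply_ite (fun t : ℝ => t ^ 2), Finset.sum_ite_eq']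

lemma eigenpair_val {m n : ℕ} {A : Fin m → Fin n → Fin m → Fin n → ℝ}
    {lam : ℝ} {x : Fin m → ℝ} {y : Fin n → ℝ} (h : IsMEigenpair A lam x y) :
    lam = bqForm A x y := by
  obtain ⟨hx1, hy1, hex, hey⟩ := h
  have heq : ∀ i, (∑ i1, (∑ j1, ∑ j2, A i1 j1 i j2 * y j1 * y j2) * x i1)
      + (∑ i2, (∑ j1, ∑ j2, A i j1 i2 j2 * y j1 * y j2) * x i2) = 2 * lam * x i := by
    intro i
    rw [Sx_left, Sx_right]
    exact hex i
  have h3 := qf_double (fun i1 i2 => ∑ j1, ∑ j2, A i1 j1 i2 j2 * y j1 * y j2) x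
  have h4 : ∑ i, (((∑ i1, (∑ j1, ∑ j2, A i1 j1 i j2 * y j1 * y j2) * x i1)
      + (∑ i2, (∑ j1, ∑ j2, A i j1 i2 j2 * y j1 * y j2) * x i2))) * x i
      = ∑ i, (2 * lam * x i) * x i :=
    Finset.sum_congr rfl fun i _ => by rw [heq i]
  have h5 : ∑ i, (2 * lam * x i) * x i = 2 * lam := by
    have hper : ∀ i, (2 * lam * x i) * x i = 2 * lam * x i ^ 2 := fun i => by ring
    simp_rw [hper, ← Finset.mul_sum, hx1, mul_one]
  have h6 : qf (fun i1 i2 => ∑ j1, ∑ j2, A i1 j1 i2 j2 * y j1 * y j2) x = bqForm A x y :=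
    bq_as_qf_x A y x
  rw [h4, h5, h6] at h3
  linarith

/-- A biquadratic tensor is positive semi-definite iff all its M-eigenvalues are nonnegative. -/
theorem bq_posSemidef_iff_M_eigenvalues_nonneg {m n : ℕ} (hm : 2 ≤ m) (hn : 2 ≤ n)
    (A : Fin m → Fin n → Fin m → Fin n → ℝ) :
    BQPosSemidef A ↔ (∀ lam, IsMEigenvalue A lam → 0 ≤ lam) := by
  constructor
  · rintro hpsd lam ⟨x, y, hpair⟩
    rw [eigenpair_val hpair]
    exact hpsd x y
  · intro hev
    -- minimize bqForm over the product of spheres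
    have hm0 : 0 < m := by omega
    have hn0 : 0 < n := by omega
    have hne : (({v : Fin m → ℝ | ∑ i, v i ^ 2 = 1} ×ˢ
        {v : Fin n → ℝ | ∑ i, v i ^ 2 = 1}) : Set ((Fin m → ℝ) × (Fin n → ℝ))).Nonempty :=
      ⟨(fun i => if i = ⟨0, hm0⟩ then (1:ℝ) else 0, fun j => if j = ⟨0, hn0⟩ then (1:ℝ) else 0),
        ⟨sum_single_sq m hm0, sum_single_sq n hn0⟩⟩
    obtain ⟨p, hp, hmin⟩ := ((isCompact_sph m).prod (isCompact_sph n)).exists_isMinOn hne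
      ((bq_continuous A).continuousOn)
    obtain ⟨x₀, y₀⟩ := p
    have hx₀ : ∑ i, x₀ i ^ 2 = 1 := hp.1
    have hy₀ : ∑ j, y₀ j ^ 2 = 1 := hp.2
    set μ := bqForm A x₀ y₀ with hμdef
    have hminS : ∀ (u : Fin m → ℝ) (w : Fin n → ℝ), (∑ i, u i ^ 2 = 1) →
        (∑ j, w j ^ 2 = 1) → μ ≤ bqForm A u w := by
      intro u w hu hw
      exact isMinOn_iff.mp hmin (u, w) (Set.mk_mem_prod hu hw)
    -- x₀ is a minimizer of the quadratic form with S from y₀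
    have hmx : ∀ v : Fin m → ℝ, μ * (∑ i, v i ^ 2) ≤
        qf (fun i1 i2 => ∑ j1, ∑ j2, A i1 j1 i2 j2 * y₀ j1 * y₀ j2) v :=
      qf_min_of_sphere _ _ (fun v hv => by
        rw [bq_as_qf_x]; exact hminS v y₀ hv hy₀)
    have hmy : ∀ v : Fin n → ℝ, μ * (∑ j, v j ^ 2) ≤
        qf (fun j1 j2 => ∑ i1, ∑ i2, A i1 j1 i2 j2 * x₀ i1 * x₀ i2) v :=
      qf_min_of_sphere _ _ (fun v hv => by
        rw [bq_as_qf_y]; exact hminS x₀ v hx₀ hv)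
    have heigx := qf_min_eigen _ x₀ μ hx₀ (bq_as_qf_x A y₀ x₀) hmx
    have heigy := qf_min_eigen _ y₀ μ hy₀ (bq_as_qf_y A x₀ y₀) hmy
    have hpair : IsMEigenpair A μ x₀ y₀ := by
      refine ⟨hx₀, hy₀, fun i => ?_, fun j => ?_⟩
      · rw [← Sx_left A x₀ y₀ i, ← Sx_right A x₀ y₀ i]
        exact heigx i
      · rw [← Sy_left A x₀ y₀ j, ← Sy_right A x₀ y₀ j]
        exact heigy j
    have hμ0 : 0 ≤ μ := hev μ ⟨x₀, y₀, hpair⟩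
    -- conclude positive semidefiniteness
    intro x y
    have step1 : ∀ (u : Fin m → ℝ) (w : Fin n → ℝ), (∑ j, w j ^ 2 = 1) →
        0 ≤ bqForm A u w := by
      intro u w hw
      have h := qf_min_of_sphere (fun i1 i2 => ∑ j1, ∑ j2, A i1 j1 i2 j2 * w j1 * w j2) μ
        (fun v hv => by rw [bq_as_qf_x]; exact hminS v w hv hw) u
      rw [bq_as_qf_x] at h
      have : 0 ≤ μ * ∑ i, u i ^ 2 :=
        mul_nonneg hμ0 (Finset.sum_nonneg fun i _ => sq_nonneg (u i))
      linarith
    have h := qf_min_of_sphere (fun j1 j2 => ∑ i1, ∑ i2, A i1 j1 i2 j2 * x i1 * x i2) 0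
      (fun w hw => by rw [bq_as_qf_y]; exact step1 x w hw) y
    rw [bq_as_qf_y] at h
    simpa using h
end
end

section
/- Consider a diagonal biquadratic tensor A ∈ ℝ^{2×2×2×2} with diagonal entries a_{1111} = 1, a_{1212} = α, a_{2121} = β, a_{2222} = γ, and suppose γ + 1 − α − β ≠ 0, with (γ−β)/(γ+1−α−β), (1−α)/(γ+1−α−β), (γ−α)/(γ+1−α−β), (1−β)/(γ+1−α−β) all strictly positive. Then λ = (γ − αβ)/(γ + 1 − α − β) is an M-eigenvalue of A, with M-eigenvectors x, y whose components satisfy x₁² = (γ−β)/(γ+1−α−β), x₂² = (1−α)/(γ+1−α−β), y₁² = (γ−α)/(γ+1−α−β), y₂² = (1−β)/(γ+1−α−β). -/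
noncomputable section
open Finset

/-! For a diagonal tensor the M-eigenvalue equations decouple into
`x i * (∑ j, a_ijij * y j ^ 2 - λ) = 0` and `y j * (∑ i, a_ijij * x i ^ 2 - λ) = 0`.
Looking for an eigenpair with no zero component turns them into a linear system in the
squares `x i ^ 2`, `y j ^ 2`; in `BQ(2,2)` this system, together with the two normalizations,
is solved by the stated fractions, which are positive by hypothesis and hence have square
roots. -/

def IsDiagonalBQ {m n : ℕ} (A : Fin m → Fin n → Fin m → Fin n → ℝ) : Prop :=
  ∀ i1 j1 i2 j2, ¬(i1 = i2 ∧ j1 = j2) → A i1 j1 i2 j2 = 0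

namespace IsDiagonalBQ

variable {m n : ℕ} {A : Fin m → Fin n → Fin m → Fin n → ℝ}

theorem x_equation_lhs_eq (hA : IsDiagonalBQ A) (x : Fin m → ℝ) (y : Fin n → ℝ) (i : Fin m) :
    (∑ i1, ∑ j1, ∑ j2, A i1 j1 i j2 * x i1 * y j1 * y j2)
      + (∑ i2, ∑ j1, ∑ j2, A i j1 i2 j2 * y j1 * x i2 * y j2)
      = 2 * (x i * ∑ j, A i j i j * y j ^ 2) := by
  rw [Fintype.sum_eq_single i fun i1 h => sum_eq_zero fun j1 _ => sum_eq_zero fun j2 _ => by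
      rw [hA _ _ _ _ fun h' => h h'.1]; ring,
    Fintype.sum_eq_single i fun i2 h => sum_eq_zero fun j1 _ => sum_eq_zero fun j2 _ => by
      rw [hA _ _ _ _ fun h' => h h'.1.symm]; ring,
    ← sum_add_distrib, mul_sum, mul_sum]
  refine sum_congr rfl fun j1 _ => ?_
  rw [Fintype.sum_eq_single j1 fun j2 h => by rw [hA _ _ _ _ fun h' => h h'.2.symm]; ring,
    Fintype.sum_eq_single j1 fun j2 h => by rw [hA _ _ _ _ fun h' => h h'.2.symm]; ring]
  ring

theorem y_equation_lhs_eq (hA : IsDiagonalBQ A) (x : Fin m → ℝ) (y : Fin n → ℝ) (j : Fin n) :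
    (∑ i1, ∑ i2, ∑ j1, A i1 j1 i2 j * x i1 * y j1 * x i2)
      + (∑ i1, ∑ i2, ∑ j2, A i1 j i2 j2 * x i1 * x i2 * y j2)
      = 2 * (y j * ∑ i, A i j i j * x i ^ 2) := by
  rw [← sum_add_distrib, mul_sum, mul_sum]
  refine sum_congr rfl fun i1 _ => ?_
  rw [Fintype.sum_eq_single i1 fun i2 h => sum_eq_zero fun j1 _ => by
      rw [hA _ _ _ _ fun h' => h h'.1.symm]; ring,
    Fintype.sum_eq_single i1 fun i2 h => sum_eq_zero fun j2 _ => by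
      rw [hA _ _ _ _ fun h' => h h'.1.symm]; ring,
    Fintype.sum_eq_single j fun j1 h => by rw [hA _ _ _ _ fun h' => h h'.2]; ring,
    Fintype.sum_eq_single j fun j2 h => by rw [hA _ _ _ _ fun h' => h h'.2.symm]; ring]
  ring

theorem isMEigenpair_iff (hA : IsDiagonalBQ A) {lam : ℝ} {x : Fin m → ℝ} {y : Fin n → ℝ} :
    IsMEigenpair A lam x y ↔ (∑ i, x i ^ 2 = 1) ∧ (∑ j, y j ^ 2 = 1) ∧
      (∀ i, x i * ∑ j, A i j i j * y j ^ 2 = lam * x i) ∧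
      (∀ j, y j * ∑ i, A i j i j * x i ^ 2 = lam * y j) := by
  simp only [IsMEigenpair, hA.x_equation_lhs_eq, hA.y_equation_lhs_eq, mul_assoc (2 : ℝ) lam,
    mul_right_inj' (two_ne_zero' ℝ)]

theorem isMEigenpair_of_forall_sum_eq (hA : IsDiagonalBQ A) {lam : ℝ} {x : Fin m → ℝ}
    {y : Fin n → ℝ} (hx : ∑ i, x i ^ 2 = 1) (hy : ∑ j, y j ^ 2 = 1)
    (hxy : ∀ i, ∑ j, A i j i j * y j ^ 2 = lam) (hyx : ∀ j, ∑ i, A i j i j * x i ^ 2 = lam) :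
    IsMEigenpair A lam x y :=
  hA.isMEigenpair_iff.2
    ⟨hx, hy, fun i => by rw [hxy, mul_comm], fun j => by rw [hyx, mul_comm]⟩

end IsDiagonalBQ

/-- A diagonal biquadratic tensor in BQ(2,2) may have an M-eigenvalue distinct from
its diagonal entries: λ = (γ − αβ)/(γ + 1 − α − β). -/
theorem diagonal_bq22_extra_M_eigenvalue (α β γ : ℝ)
    (A : Fin 2 → Fin 2 → Fin 2 → Fin 2 → ℝ)
    (hdiag : ∀ i1 j1 i2 j2, ¬(i1 = i2 ∧ j1 = j2) → A i1 j1 i2 j2 = 0)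
    (h11 : A 0 0 0 0 = 1) (h12 : A 0 1 0 1 = α)
    (h21 : A 1 0 1 0 = β) (h22 : A 1 1 1 1 = γ)
    (hden : γ + 1 - α - β ≠ 0)
    (p1 : 0 < (γ - β) / (γ + 1 - α - β)) (p2 : 0 < (1 - α) / (γ + 1 - α - β))
    (p3 : 0 < (γ - α) / (γ + 1 - α - β)) (p4 : 0 < (1 - β) / (γ + 1 - α - β)) :
    ∃ x y : Fin 2 → ℝ,
      IsMEigenpair A ((γ - α * β) / (γ + 1 - α - β)) x y ∧
      x 0 ^ 2 = (γ - β) / (γ + 1 - α - β) ∧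
      x 1 ^ 2 = (1 - α) / (γ + 1 - α - β) ∧
      y 0 ^ 2 = (γ - α) / (γ + 1 - α - β) ∧
      y 1 ^ 2 = (1 - β) / (γ + 1 - α - β) := by
  set x : Fin 2 → ℝ := ![√((γ - β) / (γ + 1 - α - β)), √((1 - α) / (γ + 1 - α - β))]
  set y : Fin 2 → ℝ := ![√((γ - α) / (γ + 1 - α - β)), √((1 - β) / (γ + 1 - α - β))]
  have hx0 : x 0 ^ 2 = (γ - β) / (γ + 1 - α - β) := Real.sq_sqrt p1.le
  have hx1 : x 1 ^ 2 = (1 - α) / (γ + 1 - α - β) := Real.sq_sqrt p2.le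
  have hy0 : y 0 ^ 2 = (γ - α) / (γ + 1 - α - β) := Real.sq_sqrt p3.le
  have hy1 : y 1 ^ 2 = (1 - β) / (γ + 1 - α - β) := Real.sq_sqrt p4.le
  refine ⟨x, y, IsDiagonalBQ.isMEigenpair_of_forall_sum_eq hdiag ?_ ?_ ?_ ?_, hx0, hx1, hy0, hy1⟩
  all_goals
    simp only [Fin.forall_fin_two, Fin.sum_univ_two, hx0, hx1, hy0, hy1, h11, h12, h21, h22]
  · field_simp; ring
  · field_simp; ring
  · constructor <;> field_simp <;> ring
  · constructor <;> field_simp <;> ring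
end
end

section
/- (Gershgorin-type theorem for biquadratic tensors) Let A ∈ ℝ^{m×n×m×n} and define, for each i, j, r_{ij} = (1/4) Σ_{i1} (Σ_{j2} |ā_{i1 j i j2}| + Σ_{j1} |ā_{i1 j1 i j}|) + (1/4) Σ_{i2} (Σ_{j2} |ā_{i j i2 j2}| + Σ_{j1} |ā_{i j1 i2 j}|), where ā equals a for off-diagonal entries and 0 for diagonal entries. Then any M-eigenvalue λ of A satisfies λ ≤ max_{i ∈ [m]} max_{j ∈ [n]} (a_{ijij} + r_{ij}) and λ ≥ min_{i ∈ [m]} min_{j ∈ [n]} (a_{ijij} − r_{ij}). -/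
noncomputable section
open Finset

/-- The off-diagonal part of A: diagonal entries replaced by 0. -/
def bqOffDiag {m n : ℕ} (A : Fin m → Fin n → Fin m → Fin n → ℝ) :
    Fin m → Fin n → Fin m → Fin n → ℝ :=
  fun i1 j1 i2 j2 => if i1 = i2 ∧ j1 = j2 then 0 else A i1 j1 i2 j2

/-- The Gershgorin radius r_{ij}. -/
def bqRadius {m n : ℕ} (A : Fin m → Fin n → Fin m → Fin n → ℝ)
    (i : Fin m) (j : Fin n) : ℝ :=
  (1/4) * (∑ i1, ((∑ j2, |bqOffDiag A i1 j i j2|) + (∑ j1, |bqOffDiag A i1 j1 i j|)))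
  + (1/4) * (∑ i2, ((∑ j2, |bqOffDiag A i j i2 j2|) + (∑ j1, |bqOffDiag A i j1 i2 j|)))

/-- A is diagonally dominated. -/
def BQDiagDom {m n : ℕ} (A : Fin m → Fin n → Fin m → Fin n → ℝ) : Prop :=
  ∀ i j, bqRadius A i j ≤ A i j i j

/-- A is strictly diagonally dominated. -/
def BQStrictDiagDom {m n : ℕ} (A : Fin m → Fin n → Fin m → Fin n → ℝ) : Prop :=
  ∀ i j, bqRadius A i j < A i j i j

private lemma quad_bound' (a b c d X : ℝ) (hb : |b| ≤ X) :
    |a * b * c * d| ≤ |a| * X * ((c ^ 2 + d ^ 2) / 2) := by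
  have h1 : |a * b * c * d| = |a| * |b| * (|c| * |d|) := by
    rw [abs_mul, abs_mul, abs_mul]; ring
  have h2 : |c| * |d| ≤ (c ^ 2 + d ^ 2) / 2 := by
    nlinarith [sq_nonneg (|c| - |d|), sq_abs c, sq_abs d]
  have h3 : |a| * |b| ≤ |a| * X := mul_le_mul_of_nonneg_left hb (abs_nonneg a)
  rw [h1]
  exact mul_le_mul h3 h2 (mul_nonneg (abs_nonneg c) (abs_nonneg d))
    (mul_nonneg (abs_nonneg a) ((abs_nonneg b).trans hb))

private lemma rearrange' {m n : ℕ} (c : Fin m → Fin n → Fin n → ℝ) (y : Fin n → ℝ) :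
    ∑ i1, ∑ j1, ∑ j2, c i1 j1 j2 * ((y j1 ^ 2 + y j2 ^ 2) / 2)
    = ∑ j, y j ^ 2 * ((1/2) * ((∑ i1, ∑ j2, c i1 j j2) + (∑ i1, ∑ j1, c i1 j1 j))) := by
  have h1 : ∀ i1 j1 j2, c i1 j1 j2 * ((y j1 ^ 2 + y j2 ^ 2) / 2)
      = y j1 ^ 2 * ((1/2) * c i1 j1 j2) + y j2 ^ 2 * ((1/2) * c i1 j1 j2) := by
    intros; ring
  simp only [h1, Finset.sum_add_distrib]
  have eqA : ∑ i1, ∑ j1, ∑ j2, y j1 ^ 2 * ((1/2) * c i1 j1 j2)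
      = ∑ j, y j ^ 2 * ((1/2) * ∑ i1, ∑ j2, c i1 j j2) := by
    rw [Finset.sum_comm]
    refine Finset.sum_congr rfl fun j _ => ?_
    simp [Finset.mul_sum]
  have eqB : ∑ i1, ∑ j1, ∑ j2, y j2 ^ 2 * ((1/2) * c i1 j1 j2)
      = ∑ j, y j ^ 2 * ((1/2) * ∑ i1, ∑ j1, c i1 j1 j) := by
    have hsw : ∀ i1, ∑ j1, ∑ j2, y j2 ^ 2 * ((1/2) * c i1 j1 j2)
        = ∑ j2, ∑ j1, y j2 ^ 2 * ((1/2) * c i1 j1 j2) := fun i1 => Finset.sum_comm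
    simp only [hsw]
    rw [Finset.sum_comm]
    refine Finset.sum_congr rfl fun j _ => ?_
    simp [Finset.mul_sum]
  rw [eqA, eqB, ← Finset.sum_add_distrib]
  refine Finset.sum_congr rfl fun j _ => ?_
  ring

private lemma bq_dec1 {m n : ℕ} (A : Fin m → Fin n → Fin m → Fin n → ℝ)
    (x : Fin m → ℝ) (y : Fin n → ℝ) (i₀ : Fin m) :
    (∑ i1, ∑ j1, ∑ j2, A i1 j1 i₀ j2 * x i1 * y j1 * y j2)
      = x i₀ * (∑ j, A i₀ j i₀ j * y j ^ 2)
        + ∑ i1, ∑ j1, ∑ j2, bqOffDiag A i1 j1 i₀ j2 * x i1 * y j1 * y j2 := by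
  have key : ∀ (i1 : Fin m) (j1 j2 : Fin n), A i1 j1 i₀ j2 * x i1 * y j1 * y j2
      = (if j1 = j2 then (if i1 = i₀ then A i1 j1 i₀ j2 * x i1 * y j1 * y j2 else 0) else 0)
        + bqOffDiag A i1 j1 i₀ j2 * x i1 * y j1 * y j2 := by
    intro i1 j1 j2
    by_cases h1 : i1 = i₀ <;> by_cases h2 : j1 = j2
    · subst h1; subst h2; simp [bqOffDiag]
    · simp [bqOffDiag, h1, h2]
    · subst h2; simp [bqOffDiag, h1]
    · simp [bqOffDiag, h1, h2]
  rw [Finset.sum_congr rfl fun i1 _ => Finset.sum_congr rfl fun j1 _ =>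
    Finset.sum_congr rfl fun j2 _ => key i1 j1 j2]
  simp only [Finset.sum_add_distrib, Finset.sum_ite_eq, Finset.mem_univ, if_true]
  congr 1
  rw [Finset.sum_comm]
  simp only [Finset.sum_ite_eq', Finset.mem_univ, if_true, Finset.mul_sum]
  exact Finset.sum_congr rfl fun j _ => by ring

private lemma bq_dec2 {m n : ℕ} (A : Fin m → Fin n → Fin m → Fin n → ℝ)
    (x : Fin m → ℝ) (y : Fin n → ℝ) (i₀ : Fin m) :
    (∑ i2, ∑ j1, ∑ j2, A i₀ j1 i2 j2 * y j1 * x i2 * y j2)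
      = x i₀ * (∑ j, A i₀ j i₀ j * y j ^ 2)
        + ∑ i2, ∑ j1, ∑ j2, bqOffDiag A i₀ j1 i2 j2 * y j1 * x i2 * y j2 := by
  have key : ∀ (i2 : Fin m) (j1 j2 : Fin n), A i₀ j1 i2 j2 * y j1 * x i2 * y j2
      = (if j1 = j2 then (if i2 = i₀ then A i₀ j1 i2 j2 * y j1 * x i2 * y j2 else 0) else 0)
        + bqOffDiag A i₀ j1 i2 j2 * y j1 * x i2 * y j2 := by
    intro i2 j1 j2
    by_cases h1 : i2 = i₀ <;> by_cases h2 : j1 = j2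
    · subst h1; subst h2; simp [bqOffDiag]
    · subst h1; simp [bqOffDiag, h2]
    · subst h2
      have h1' : ¬ i₀ = i2 := fun hh => h1 hh.symm
      simp [bqOffDiag, h1, h1']
    · simp [bqOffDiag, h1, h2]
  rw [Finset.sum_congr rfl fun i2 _ => Finset.sum_congr rfl fun j1 _ =>
    Finset.sum_congr rfl fun j2 _ => key i2 j1 j2]
  simp only [Finset.sum_add_distrib, Finset.sum_ite_eq, Finset.mem_univ, if_true]
  congr 1
  rw [Finset.sum_comm]
  simp only [Finset.sum_ite_eq', Finset.mem_univ, if_true, Finset.mul_sum]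
  exact Finset.sum_congr rfl fun j _ => by ring

/-- Gershgorin-type theorem: every M-eigenvalue λ of A satisfies
λ ≤ max_{i,j}(a_{ijij} + r_{ij}) and λ ≥ min_{i,j}(a_{ijij} − r_{ij}). -/
theorem bq_gershgorin {m n : ℕ} (hm : 2 ≤ m) (hn : 2 ≤ n)
    (A : Fin m → Fin n → Fin m → Fin n → ℝ) (lam : ℝ)
    (h : IsMEigenvalue A lam) :
    (∃ i j, lam ≤ A i j i j + bqRadius A i j) ∧
    (∃ i j, A i j i j - bqRadius A i j ≤ lam) := by
  obtain ⟨x, y, hx, hy, hxe, -⟩ := h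
  have hm0 : 0 < m := by omega
  obtain ⟨i₀, -, hi₀⟩ := Finset.exists_max_image (Finset.univ : Finset (Fin m))
    (fun i => |x i|) ⟨⟨0, hm0⟩, Finset.mem_univ _⟩
  have hi₀' : ∀ i, |x i| ≤ |x i₀| := fun i => hi₀ i (Finset.mem_univ i)
  have hxi₀ : x i₀ ≠ 0 := by
    intro h0
    have hz : ∀ i, x i = 0 := fun i => abs_eq_zero.mp
      (le_antisymm (by simpa [h0] using hi₀' i) (abs_nonneg _))
    simp [hz] at hx
  set D : ℝ := ∑ j, A i₀ j i₀ j * y j ^ 2 with hD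
  set E1 : ℝ := ∑ i1, ∑ j1, ∑ j2, bqOffDiag A i1 j1 i₀ j2 * x i1 * y j1 * y j2 with hE1d
  set E2 : ℝ := ∑ i2, ∑ j1, ∑ j2, bqOffDiag A i₀ j1 i2 j2 * y j1 * x i2 * y j2 with hE2d
  have heig := hxe i₀
  rw [bq_dec1 A x y i₀, bq_dec2 A x y i₀] at heig
  have hE : 2 * x i₀ * (lam - D) = E1 + E2 := by
    rw [hE1d, hE2d, hD]; linarith [heig]
  -- bounds
  set S1 : ℝ := ∑ i1, ∑ j1, ∑ j2, |bqOffDiag A i1 j1 i₀ j2| * ((y j1 ^ 2 + y j2 ^ 2) / 2)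
    with hS1d
  set S2 : ℝ := ∑ i2, ∑ j1, ∑ j2, |bqOffDiag A i₀ j1 i2 j2| * ((y j1 ^ 2 + y j2 ^ 2) / 2)
    with hS2d
  have hB1 : |E1| ≤ |x i₀| * S1 := by
    calc |E1| ≤ ∑ i1, ∑ j1, ∑ j2, |bqOffDiag A i1 j1 i₀ j2 * x i1 * y j1 * y j2| := by
          rw [hE1d]
          refine (Finset.abs_sum_le_sum_abs _ _).trans (Finset.sum_le_sum fun i1 _ => ?_)
          refine (Finset.abs_sum_le_sum_abs _ _).trans (Finset.sum_le_sum fun j1 _ => ?_)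
          exact Finset.abs_sum_le_sum_abs _ _
      _ ≤ ∑ i1, ∑ j1, ∑ j2, |bqOffDiag A i1 j1 i₀ j2| * |x i₀| * ((y j1 ^ 2 + y j2 ^ 2)/2) := by
          refine Finset.sum_le_sum fun i1 _ => Finset.sum_le_sum fun j1 _ =>
            Finset.sum_le_sum fun j2 _ => ?_
          exact quad_bound' _ _ _ _ _ (hi₀' i1)
      _ = |x i₀| * S1 := by
          rw [hS1d, Finset.mul_sum]
          refine Finset.sum_congr rfl fun i1 _ => ?_
          rw [Finset.mul_sum]
          refine Finset.sum_congr rfl fun j1 _ => ?_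
          rw [Finset.mul_sum]
          exact Finset.sum_congr rfl fun j2 _ => by ring
  have hB2 : |E2| ≤ |x i₀| * S2 := by
    calc |E2| ≤ ∑ i2, ∑ j1, ∑ j2, |bqOffDiag A i₀ j1 i2 j2 * y j1 * x i2 * y j2| := by
          rw [hE2d]
          refine (Finset.abs_sum_le_sum_abs _ _).trans (Finset.sum_le_sum fun i2 _ => ?_)
          refine (Finset.abs_sum_le_sum_abs _ _).trans (Finset.sum_le_sum fun j1 _ => ?_)
          exact Finset.abs_sum_le_sum_abs _ _
      _ ≤ ∑ i2, ∑ j1, ∑ j2, |bqOffDiag A i₀ j1 i2 j2| * |x i₀| * ((y j1 ^ 2 + y j2 ^ 2)/2) := by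
          refine Finset.sum_le_sum fun i2 _ => Finset.sum_le_sum fun j1 _ =>
            Finset.sum_le_sum fun j2 _ => ?_
          have hre : bqOffDiag A i₀ j1 i2 j2 * y j1 * x i2 * y j2
              = bqOffDiag A i₀ j1 i2 j2 * x i2 * y j1 * y j2 := by ring
          rw [hre]
          exact quad_bound' _ _ _ _ _ (hi₀' i2)
      _ = |x i₀| * S2 := by
          rw [hS2d, Finset.mul_sum]
          refine Finset.sum_congr rfl fun i2 _ => ?_
          rw [Finset.mul_sum]
          refine Finset.sum_congr rfl fun j1 _ => ?_
          rw [Finset.mul_sum]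
          exact Finset.sum_congr rfl fun j2 _ => by ring
  have hsum : S1 + S2 = ∑ j, y j ^ 2 * (2 * bqRadius A i₀ j) := by
    rw [hS1d, hS2d, rearrange' (fun i1 j1 j2 => |bqOffDiag A i1 j1 i₀ j2|) y,
      rearrange' (fun i2 j1 j2 => |bqOffDiag A i₀ j1 i2 j2|) y, ← Finset.sum_add_distrib]
    refine Finset.sum_congr rfl fun j _ => ?_
    simp only [bqRadius, Finset.sum_add_distrib]
    ring
  have hxpos : 0 < |x i₀| := abs_pos.mpr hxi₀
  have hmain : |lam - D| ≤ ∑ j, y j ^ 2 * bqRadius A i₀ j := by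
    have h1 : |2 * x i₀ * (lam - D)| ≤ |x i₀| * (S1 + S2) := by
      rw [hE]
      calc |E1 + E2| ≤ |E1| + |E2| := abs_add_le _ _
        _ ≤ |x i₀| * S1 + |x i₀| * S2 := add_le_add hB1 hB2
        _ = |x i₀| * (S1 + S2) := by ring
    have h2 : |2 * x i₀ * (lam - D)| = 2 * |x i₀| * |lam - D| := by
      rw [abs_mul, abs_mul, abs_two]
    have h3 : S1 + S2 = 2 * ∑ j, y j ^ 2 * bqRadius A i₀ j := by
      rw [hsum, Finset.mul_sum]
      exact Finset.sum_congr rfl fun j _ => by ring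
    rw [h2, h3] at h1
    nlinarith [h1, hxpos]
  have hDR1 : D + ∑ j, y j ^ 2 * bqRadius A i₀ j
      = ∑ j, y j ^ 2 * (A i₀ j i₀ j + bqRadius A i₀ j) := by
    rw [hD, ← Finset.sum_add_distrib]
    exact Finset.sum_congr rfl fun j _ => by ring
  have hDR2 : D - ∑ j, y j ^ 2 * bqRadius A i₀ j
      = ∑ j, y j ^ 2 * (A i₀ j i₀ j - bqRadius A i₀ j) := by
    rw [hD, ← Finset.sum_sub_distrib]
    exact Finset.sum_congr rfl fun j _ => by ring
  obtain ⟨hup, hlo⟩ := abs_le.mp hmain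
  have hylam : ∑ j, y j ^ 2 * lam = lam := by
    rw [← Finset.sum_mul, hy, one_mul]
  constructor
  · refine ⟨i₀, ?_⟩
    by_contra hc
    push_neg at hc
    obtain ⟨j', hj'⟩ : ∃ j, y j ≠ 0 := by
      by_contra hcy
      push_neg at hcy
      simp [hcy] at hy
    have hylt : ∑ j, y j ^ 2 * (A i₀ j i₀ j + bqRadius A i₀ j) < ∑ j, y j ^ 2 * lam := by
      refine Finset.sum_lt_sum (fun j _ => mul_le_mul_of_nonneg_left (hc j).le (sq_nonneg _))
        ⟨j', Finset.mem_univ _, ?_⟩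
      exact mul_lt_mul_of_pos_left (hc j')
        (lt_of_le_of_ne (sq_nonneg _) (Ne.symm (pow_ne_zero 2 hj')))
    rw [hylam, ← hDR1] at hylt
    linarith
  · refine ⟨i₀, ?_⟩
    by_contra hc
    push_neg at hc
    obtain ⟨j', hj'⟩ : ∃ j, y j ≠ 0 := by
      by_contra hcy
      push_neg at hcy
      simp [hcy] at hy
    have hylt : ∑ j, y j ^ 2 * lam < ∑ j, y j ^ 2 * (A i₀ j i₀ j - bqRadius A i₀ j) := by
      refine Finset.sum_lt_sum (fun j _ => mul_le_mul_of_nonneg_left (hc j).le (sq_nonneg _))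
        ⟨j', Finset.mem_univ _, ?_⟩
      exact mul_lt_mul_of_pos_left (hc j')
        (lt_of_le_of_ne (sq_nonneg _) (Ne.symm (pow_ne_zero 2 hj')))
    rw [hylam, ← hDR2] at hylt
    linarith
end
end

section
/- A diagonally dominated biquadratic tensor is positive semi-definite, and a strictly diagonally dominated biquadratic tensor is positive definite. -/
noncomputable section
open Finset

private lemma pt_ineq (t a b c d : ℝ) :
    0 ≤ t * a * b * c * d
      + |t| * (1/4) * (a^2*b^2 + a^2*d^2 + c^2*b^2 + c^2*d^2) := by
  rcases le_or_gt 0 t with h | h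
  · rw [abs_of_nonneg h]
    nlinarith [mul_nonneg h (sq_nonneg (a*b + c*d)), mul_nonneg h (sq_nonneg (a*d + c*b))]
  · rw [abs_of_neg h]
    nlinarith [mul_nonneg (neg_pos.mpr h).le (sq_nonneg (a*b - c*d)),
      mul_nonneg (neg_pos.mpr h).le (sq_nonneg (a*d - c*b))]

private lemma sum4_flat {m n : ℕ} (f : Fin m → Fin n → Fin m → Fin n → ℝ) :
    ∑ i1, ∑ j1, ∑ i2, ∑ j2, f i1 j1 i2 j2
      = ∑ p : Fin m × Fin n × Fin m × Fin n, f p.1 p.2.1 p.2.2.1 p.2.2.2 := by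
  simp [Fintype.sum_prod_type]

private lemma sum4_swapJ {m n : ℕ} (f : Fin m → Fin n → Fin m → Fin n → ℝ) :
    ∑ i1, ∑ j1, ∑ i2, ∑ j2, f i1 j1 i2 j2
      = ∑ i1, ∑ j1, ∑ i2, ∑ j2, f i1 j2 i2 j1 := by
  rw [sum4_flat, sum4_flat]
  exact Fintype.sum_equiv
    ⟨fun p => (p.1, p.2.2.2, p.2.2.1, p.2.1), fun p => (p.1, p.2.2.2, p.2.2.1, p.2.1),
     fun _ => rfl, fun _ => rfl⟩ _ _ (fun _ => rfl)

private lemma sum4_swapI {m n : ℕ} (f : Fin m → Fin n → Fin m → Fin n → ℝ) :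
    ∑ i1, ∑ j1, ∑ i2, ∑ j2, f i1 j1 i2 j2
      = ∑ i1, ∑ j1, ∑ i2, ∑ j2, f i2 j1 i1 j2 := by
  rw [sum4_flat, sum4_flat]
  exact Fintype.sum_equiv
    ⟨fun p => (p.2.2.1, p.2.1, p.1, p.2.2.2), fun p => (p.2.2.1, p.2.1, p.1, p.2.2.2),
     fun _ => rfl, fun _ => rfl⟩ _ _ (fun _ => rfl)

private lemma sum4_swapB {m n : ℕ} (f : Fin m → Fin n → Fin m → Fin n → ℝ) :
    ∑ i1, ∑ j1, ∑ i2, ∑ j2, f i1 j1 i2 j2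
      = ∑ i1, ∑ j1, ∑ i2, ∑ j2, f i2 j2 i1 j1 := by
  rw [sum4_flat, sum4_flat]
  exact Fintype.sum_equiv
    ⟨fun p => (p.2.2.1, p.2.2.2, p.1, p.2.1), fun p => (p.2.2.1, p.2.2.2, p.1, p.2.1),
     fun _ => rfl, fun _ => rfl⟩ _ _ (fun _ => rfl)

private lemma pull_const {m n : ℕ} (g : Fin m → Fin n → ℝ) (c : ℝ) :
    ∑ i2, ∑ j2, g i2 j2 * (1/4) * c = (1/4) * c * ∑ i2, ∑ j2, g i2 j2 := by
  rw [Finset.mul_sum]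
  refine Finset.sum_congr rfl fun i2 _ => ?_
  rw [Finset.mul_sum]
  exact Finset.sum_congr rfl fun j2 _ => by ring

private lemma bqForm_split {m n : ℕ} (A : Fin m → Fin n → Fin m → Fin n → ℝ)
    (x : Fin m → ℝ) (y : Fin n → ℝ) :
    bqForm A x y = (∑ i, ∑ j, A i j i j * (x i ^ 2 * y j ^ 2)) + bqForm (bqOffDiag A) x y := by
  unfold bqForm bqOffDiag
  rw [← Finset.sum_add_distrib]
  refine Finset.sum_congr rfl fun i1 _ => ?_
  rw [← Finset.sum_add_distrib]
  refine Finset.sum_congr rfl fun j1 _ => ?_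
  have key : ∀ i2 j2, A i1 j1 i2 j2 * x i1 * y j1 * x i2 * y j2
      = (if i1 = i2 then (if j1 = j2 then A i1 j1 i2 j2 * x i1 * y j1 * x i2 * y j2 else 0) else 0)
        + (if i1 = i2 ∧ j1 = j2 then (0:ℝ) else A i1 j1 i2 j2) * x i1 * y j1 * x i2 * y j2 := by
    intro i2 j2
    by_cases h1 : i1 = i2 <;> by_cases h2 : j1 = j2 <;> simp [h1, h2]
  have step : (∑ i2, ∑ j2, A i1 j1 i2 j2 * x i1 * y j1 * x i2 * y j2)
      = (∑ i2, ∑ j2, (if i1 = i2 then (if j1 = j2 then A i1 j1 i2 j2 * x i1 * y j1 * x i2 * y j2 else 0) else 0))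
        + (∑ i2, ∑ j2, (if i1 = i2 ∧ j1 = j2 then (0:ℝ) else A i1 j1 i2 j2) * x i1 * y j1 * x i2 * y j2) := by
    rw [← Finset.sum_add_distrib]
    refine Finset.sum_congr rfl fun i2 _ => ?_
    rw [← Finset.sum_add_distrib]
    exact Finset.sum_congr rfl fun j2 _ => key i2 j2
  rw [step]
  congr 1
  rw [Finset.sum_eq_single i1]
  · rw [Finset.sum_eq_single j1]
    · simp; ring
    · intro b _ hb; simp [Ne.symm hb]
    · simp
  · intro b _ hb; simp [Ne.symm hb]
  · simp

private lemma radius_sum {m n : ℕ} (A : Fin m → Fin n → Fin m → Fin n → ℝ)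
    (x : Fin m → ℝ) (y : Fin n → ℝ) :
    ∑ i1, ∑ j1, ∑ i2, ∑ j2, |bqOffDiag A i1 j1 i2 j2| * (1/4) *
        (x i1^2*y j1^2 + x i1^2*y j2^2 + x i2^2*y j1^2 + x i2^2*y j2^2)
      = ∑ i, ∑ j, bqRadius A i j * (x i ^ 2 * y j ^ 2) := by
  have h2 := sum4_swapJ (fun i1 j1 i2 j2 => |bqOffDiag A i1 j1 i2 j2| * (1/4) * (x i1^2 * y j2^2))
  have h3 := sum4_swapI (fun i1 j1 i2 j2 => |bqOffDiag A i1 j1 i2 j2| * (1/4) * (x i2^2 * y j1^2))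
  have h4 := sum4_swapB (fun i1 j1 i2 j2 => |bqOffDiag A i1 j1 i2 j2| * (1/4) * (x i2^2 * y j2^2))
  calc ∑ i1, ∑ j1, ∑ i2, ∑ j2, |bqOffDiag A i1 j1 i2 j2| * (1/4) *
        (x i1^2*y j1^2 + x i1^2*y j2^2 + x i2^2*y j1^2 + x i2^2*y j2^2)
      = (∑ i1, ∑ j1, ∑ i2, ∑ j2, |bqOffDiag A i1 j1 i2 j2| * (1/4) * (x i1^2*y j1^2))
        + (∑ i1, ∑ j1, ∑ i2, ∑ j2, |bqOffDiag A i1 j1 i2 j2| * (1/4) * (x i1^2*y j2^2))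
        + (∑ i1, ∑ j1, ∑ i2, ∑ j2, |bqOffDiag A i1 j1 i2 j2| * (1/4) * (x i2^2*y j1^2))
        + (∑ i1, ∑ j1, ∑ i2, ∑ j2, |bqOffDiag A i1 j1 i2 j2| * (1/4) * (x i2^2*y j2^2)) := by
        simp only [mul_add, Finset.sum_add_distrib]
    _ = (∑ i1, ∑ j1, ∑ i2, ∑ j2, |bqOffDiag A i1 j1 i2 j2| * (1/4) * (x i1^2*y j1^2))
        + (∑ i1, ∑ j1, ∑ i2, ∑ j2, |bqOffDiag A i1 j2 i2 j1| * (1/4) * (x i1^2*y j1^2))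
        + (∑ i1, ∑ j1, ∑ i2, ∑ j2, |bqOffDiag A i2 j1 i1 j2| * (1/4) * (x i1^2*y j1^2))
        + (∑ i1, ∑ j1, ∑ i2, ∑ j2, |bqOffDiag A i2 j2 i1 j1| * (1/4) * (x i1^2*y j1^2)) := by
        rw [h2, h3, h4]
    _ = ∑ i, ∑ j, bqRadius A i j * (x i ^ 2 * y j ^ 2) := by
        rw [← Finset.sum_add_distrib, ← Finset.sum_add_distrib, ← Finset.sum_add_distrib]
        refine Finset.sum_congr rfl fun i _ => ?_
        rw [← Finset.sum_add_distrib, ← Finset.sum_add_distrib, ← Finset.sum_add_distrib]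
        refine Finset.sum_congr rfl fun j _ => ?_
        rw [pull_const (fun i2 j2 => |bqOffDiag A i j i2 j2|),
            pull_const (fun i2 j2 => |bqOffDiag A i j2 i2 j|),
            pull_const (fun i2 j2 => |bqOffDiag A i2 j i j2|),
            pull_const (fun i2 j2 => |bqOffDiag A i2 j2 i j|)]
        unfold bqRadius
        rw [Finset.sum_add_distrib, Finset.sum_add_distrib]
        ring

private lemma bq_lower_bound {m n : ℕ} (A : Fin m → Fin n → Fin m → Fin n → ℝ)
    (x : Fin m → ℝ) (y : Fin n → ℝ) :
    ∑ i, ∑ j, (A i j i j - bqRadius A i j) * (x i ^ 2 * y j ^ 2) ≤ bqForm A x y := by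
  have hpos : 0 ≤ bqForm (bqOffDiag A) x y
      + ∑ i, ∑ j, bqRadius A i j * (x i ^ 2 * y j ^ 2) := by
    rw [← radius_sum A x y]
    unfold bqForm
    rw [← Finset.sum_add_distrib]
    refine Finset.sum_nonneg fun i1 _ => ?_
    rw [← Finset.sum_add_distrib]
    refine Finset.sum_nonneg fun j1 _ => ?_
    rw [← Finset.sum_add_distrib]
    refine Finset.sum_nonneg fun i2 _ => ?_
    rw [← Finset.sum_add_distrib]
    refine Finset.sum_nonneg fun j2 _ => ?_
    exact pt_ineq (bqOffDiag A i1 j1 i2 j2) (x i1) (y j1) (x i2) (y j2)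
  have hexp : ∑ i, ∑ j, (A i j i j - bqRadius A i j) * (x i ^ 2 * y j ^ 2)
      = (∑ i, ∑ j, A i j i j * (x i ^ 2 * y j ^ 2))
        - ∑ i, ∑ j, bqRadius A i j * (x i ^ 2 * y j ^ 2) := by
    rw [← Finset.sum_sub_distrib]
    refine Finset.sum_congr rfl fun i _ => ?_
    rw [← Finset.sum_sub_distrib]
    exact Finset.sum_congr rfl fun j _ => by ring
  rw [hexp, bqForm_split A x y]
  linarith

/-- A diagonally dominated biquadratic tensor is positive semi-definite; a strictly
diagonally dominated biquadratic tensor is positive definite. -/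
theorem bq_diag_dom_posSemidef {m n : ℕ} (hm : 2 ≤ m) (hn : 2 ≤ n)
    (A : Fin m → Fin n → Fin m → Fin n → ℝ) :
    (BQDiagDom A → BQPosSemidef A) ∧ (BQStrictDiagDom A → BQPosDef A) := by
  constructor
  · intro hdom x y
    refine le_trans ?_ (bq_lower_bound A x y)
    refine Finset.sum_nonneg fun i _ => Finset.sum_nonneg fun j _ => ?_
    exact mul_nonneg (sub_nonneg.mpr (hdom i j)) (by positivity)
  · intro hdom x y hx hy
    refine lt_of_lt_of_le ?_ (bq_lower_bound A x y)
    have hm0 : 0 < m := by omega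
    have hn0 : 0 < n := by omega
    obtain ⟨p, -, hp⟩ := Finset.exists_min_image (Finset.univ : Finset (Fin m × Fin n))
      (fun p => A p.1 p.2 p.1 p.2 - bqRadius A p.1 p.2)
      ⟨(⟨0, hm0⟩, ⟨0, hn0⟩), Finset.mem_univ _⟩
    set ε := A p.1 p.2 p.1 p.2 - bqRadius A p.1 p.2 with hε
    have hεpos : 0 < ε := sub_pos.mpr (hdom p.1 p.2)
    have hle : ∀ i j, ε ≤ A i j i j - bqRadius A i j := fun i j => hp (i, j) (Finset.mem_univ _)
    calc (0:ℝ) < ε := hεpos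
      _ = ε * ((∑ i, x i ^ 2) * (∑ j, y j ^ 2)) := by rw [hx, hy]; ring
      _ = ∑ i, ∑ j, ε * (x i ^ 2 * y j ^ 2) := by
          rw [Finset.sum_mul_sum]
          rw [Finset.mul_sum]
          exact Finset.sum_congr rfl fun i _ => by rw [Finset.mul_sum]
      _ ≤ ∑ i, ∑ j, (A i j i j - bqRadius A i j) * (x i ^ 2 * y j ^ 2) := by
          refine Finset.sum_le_sum fun i _ => Finset.sum_le_sum fun j _ => ?_
          exact mul_le_mul_of_nonneg_right (hle i j) (by positivity)
end
end

section
/- Let A ∈ ℝ^{m×n×m×n} be a Z-biquadratic tensor (all off-diagonal entries nonpositive). Then A is diagonally dominated if and only if A is a B₀-biquadratic tensor, and A is strictly diagonally dominated if and only if A is a B-biquadratic tensor. -/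
noncomputable section
open Finset

/-- The row/column sum S_{ij} appearing in the definition of B₀-biquadratic tensors. -/
def bqBSum {m n : ℕ} (A : Fin m → Fin n → Fin m → Fin n → ℝ)
    (i : Fin m) (j : Fin n) : ℝ :=
  (∑ i1, ((∑ j2, A i1 j i j2) + (∑ j1, A i1 j1 i j)))
  + (∑ i2, ((∑ j2, A i j i2 j2) + (∑ j1, A i j1 i2 j)))

/-- A is a B₀-biquadratic tensor. -/
def IsB0BQTensor {m n : ℕ} (A : Fin m → Fin n → Fin m → Fin n → ℝ) : Prop :=
  ∀ i j, (0 ≤ bqBSum A i j) ∧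
    ∀ i1 i2 j1 j2,
      bqOffDiag A i j i2 j2 ≤ bqBSum A i j / (4 * m * n) ∧
      bqOffDiag A i1 j i j2 ≤ bqBSum A i j / (4 * m * n) ∧
      bqOffDiag A i j1 i2 j ≤ bqBSum A i j / (4 * m * n) ∧
      bqOffDiag A i1 j1 i j ≤ bqBSum A i j / (4 * m * n)

/-- A is a B-biquadratic tensor. -/
def IsBBQTensor {m n : ℕ} (A : Fin m → Fin n → Fin m → Fin n → ℝ) : Prop :=
  ∀ i j, (0 < bqBSum A i j) ∧
    ∀ i1 i2 j1 j2,
      bqOffDiag A i j i2 j2 < bqBSum A i j / (4 * m * n) ∧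
      bqOffDiag A i1 j i j2 < bqBSum A i j / (4 * m * n) ∧
      bqOffDiag A i j1 i2 j < bqBSum A i j / (4 * m * n) ∧
      bqOffDiag A i1 j1 i j < bqBSum A i j / (4 * m * n)


lemma bq_offDiag_nonpos {m n : ℕ} (A : Fin m → Fin n → Fin m → Fin n → ℝ)
    (hZ : ∀ i1 j1 i2 j2, ¬(i1 = i2 ∧ j1 = j2) → A i1 j1 i2 j2 ≤ 0)
    (i1 : Fin m) (j1 : Fin n) (i2 : Fin m) (j2 : Fin n) :
    bqOffDiag A i1 j1 i2 j2 ≤ 0 := by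
  unfold bqOffDiag
  split
  · exact le_refl 0
  · exact hZ _ _ _ _ (by assumption)

lemma bq_key {m n : ℕ} (A : Fin m → Fin n → Fin m → Fin n → ℝ)
    (hZ : ∀ i1 j1 i2 j2, ¬(i1 = i2 ∧ j1 = j2) → A i1 j1 i2 j2 ≤ 0)
    (i : Fin m) (j : Fin n) :
    bqBSum A i j = 4 * A i j i j - 4 * bqRadius A i j := by
  have habs : ∀ i1 j1 i2 j2, |bqOffDiag A i1 j1 i2 j2| = -(bqOffDiag A i1 j1 i2 j2) :=
    fun i1 j1 i2 j2 => abs_of_nonpos (bq_offDiag_nonpos A hZ i1 j1 i2 j2)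
  have hsplit : ∀ i1 j1 i2 j2, A i1 j1 i2 j2
      = bqOffDiag A i1 j1 i2 j2 + (if i1 = i2 ∧ j1 = j2 then A i1 j1 i2 j2 else 0) := by
    intro i1 j1 i2 j2
    unfold bqOffDiag
    by_cases h : i1 = i2 ∧ j1 = j2 <;> simp [h]
  have e1 : (∑ i1, ∑ j2, A i1 j i j2) = A i j i j + ∑ i1, ∑ j2, bqOffDiag A i1 j i j2 := by
    rw [Finset.sum_congr rfl fun i1 _ => Finset.sum_congr rfl fun j2 _ => hsplit i1 j i j2]
    simp [ite_and, Finset.sum_add_distrib, Finset.sum_ite_eq, Finset.sum_ite_eq', add_comm]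
  have e2 : (∑ i1, ∑ j1, A i1 j1 i j) = A i j i j + ∑ i1, ∑ j1, bqOffDiag A i1 j1 i j := by
    rw [Finset.sum_congr rfl fun i1 _ => Finset.sum_congr rfl fun j1 _ => hsplit i1 j1 i j]
    simp [ite_and, Finset.sum_add_distrib, Finset.sum_ite_eq, Finset.sum_ite_eq', add_comm]
  have e3 : (∑ i2, ∑ j2, A i j i2 j2) = A i j i j + ∑ i2, ∑ j2, bqOffDiag A i j i2 j2 := by
    rw [Finset.sum_congr rfl fun i2 _ => Finset.sum_congr rfl fun j2 _ => hsplit i j i2 j2]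
    simp [ite_and, Finset.sum_add_distrib, Finset.sum_ite_eq, Finset.sum_ite_eq', add_comm]
  have e4 : (∑ i2, ∑ j1, A i j1 i2 j) = A i j i j + ∑ i2, ∑ j1, bqOffDiag A i j1 i2 j := by
    rw [Finset.sum_congr rfl fun i2 _ => Finset.sum_congr rfl fun j1 _ => hsplit i j1 i2 j]
    simp [ite_and, Finset.sum_add_distrib, Finset.sum_ite_eq, Finset.sum_ite_eq', add_comm]
  unfold bqBSum bqRadius
  simp only [habs, Finset.sum_add_distrib, Finset.sum_neg_distrib, e1, e2, e3, e4]
  ring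

/-- For a Z-biquadratic tensor, diagonal domination is equivalent to being a
B₀-biquadratic tensor, and strict diagonal domination to being a B-biquadratic tensor. -/
theorem zbq_diag_dom_iff_B0 {m n : ℕ} (hm : 2 ≤ m) (hn : 2 ≤ n)
    (A : Fin m → Fin n → Fin m → Fin n → ℝ)
    (hZ : ∀ i1 j1 i2 j2, ¬(i1 = i2 ∧ j1 = j2) → A i1 j1 i2 j2 ≤ 0) :
    (BQDiagDom A ↔ IsB0BQTensor A) ∧ (BQStrictDiagDom A ↔ IsBBQTensor A)  := by
  have hkey := bq_key A hZ
  have hmn : (0:ℝ) < 4 * m * n := by positivity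
  constructor
  · constructor
    · intro hD i j
      have h0 : 0 ≤ bqBSum A i j := by
        rw [hkey i j]; linarith [hD i j]
      refine ⟨h0, fun i1 i2 j1 j2 => ?_⟩
      have hq : 0 ≤ bqBSum A i j / (4 * m * n) := div_nonneg h0 (le_of_lt hmn)
      exact ⟨le_trans (bq_offDiag_nonpos A hZ _ _ _ _) hq,
             le_trans (bq_offDiag_nonpos A hZ _ _ _ _) hq,
             le_trans (bq_offDiag_nonpos A hZ _ _ _ _) hq,
             le_trans (bq_offDiag_nonpos A hZ _ _ _ _) hq⟩
    · intro hB i j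
      have h0 := (hB i j).1
      rw [hkey i j] at h0
      linarith
  · constructor
    · intro hD i j
      have h0 : 0 < bqBSum A i j := by
        rw [hkey i j]; linarith [hD i j]
      refine ⟨h0, fun i1 i2 j1 j2 => ?_⟩
      have hq : 0 < bqBSum A i j / (4 * m * n) := div_pos h0 hmn
      exact ⟨lt_of_le_of_lt (bq_offDiag_nonpos A hZ _ _ _ _) hq,
             lt_of_le_of_lt (bq_offDiag_nonpos A hZ _ _ _ _) hq,
             lt_of_le_of_lt (bq_offDiag_nonpos A hZ _ _ _ _) hq,
             lt_of_le_of_lt (bq_offDiag_nonpos A hZ _ _ _ _) hq⟩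
    · intro hB i j
      have h0 := (hB i j).1
      rw [hkey i j] at h0
      linarith
end
end

section
/- Let A ∈ ℝ^{m×n×m×n} be a Z-biquadratic tensor (all off-diagonal entries nonpositive). Then A is positive semi-definite if and only if A is an M-biquadratic tensor, and A is positive definite if and only if A is a strong M-biquadratic tensor. -/
noncomputable section
open Finset

/-- The M-identity tensor. -/
def bqId {m n : ℕ} : Fin m → Fin n → Fin m → Fin n → ℝ :=
  fun i1 j1 i2 j2 => if i1 = i2 ∧ j1 = j2 then 1 else 0

/-- A is an M-biquadratic tensor: A = αI − B with B nonnegative and α ≥ λ_max(B). -/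
def IsMBQTensor {m n : ℕ} (A : Fin m → Fin n → Fin m → Fin n → ℝ) : Prop :=
  ∃ (α : ℝ) (B : Fin m → Fin n → Fin m → Fin n → ℝ),
    (∀ i1 j1 i2 j2, 0 ≤ B i1 j1 i2 j2) ∧
    (∀ i1 j1 i2 j2, A i1 j1 i2 j2 = α * bqId i1 j1 i2 j2 - B i1 j1 i2 j2) ∧
    (∀ mu, IsMEigenvalue B mu → mu ≤ α)

/-- A is a strong M-biquadratic tensor: A = αI − B with B nonnegative and α > λ_max(B). -/
def IsStrongMBQTensor {m n : ℕ} (A : Fin m → Fin n → Fin m → Fin n → ℝ) : Prop :=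
  ∃ (α : ℝ) (B : Fin m → Fin n → Fin m → Fin n → ℝ),
    (∀ i1 j1 i2 j2, 0 ≤ B i1 j1 i2 j2) ∧
    (∀ i1 j1 i2 j2, A i1 j1 i2 j2 = α * bqId i1 j1 i2 j2 - B i1 j1 i2 j2) ∧
    (∀ mu, IsMEigenvalue B mu → mu < α)

/-!
For a Z-biquadratic tensor `A`, the tensor `B = γI - A` is nonnegative as soon as `γ` dominates
the diagonal of `A`, and M-eigenpairs shift: an M-eigenpair `(μ, x, y)` of `B` is an M-eigenpair
`(γ - μ, x, y)` of `A`. Since an M-eigenvalue is the value of the form at its eigenvectors,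
(semi-)definiteness of `A` bounds every M-eigenvalue of `B` by `γ`.

Conversely, let `A = αI - B`. By compactness the form of `B` attains its maximum over pairs of unit
vectors, and at a maximiser `(x₀, y₀)` the point `x₀` maximises the quadratic form
`x ↦ bqForm B x y₀` on the unit sphere (and symmetrically for `y₀`). The Rayleigh-quotient
theorem turns these two conditions into the M-eigenvalue equations, so the maximum is an
M-eigenvalue and is at most (resp. less than) `α`. Hence the form of `A` is nonnegative (resp.
positive) on pairs of unit vectors, and by homogeneity nonnegative everywhere.
-/

open Matrix WithLp

theorem EuclideanSpace.norm_toLp_eq_one_iff {ι : Type*} [Fintype ι] (x : ι → ℝ) :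
    ‖toLp 2 x‖ = 1 ↔ ∑ i, x i ^ 2 = 1 := by
  simp [EuclideanSpace.norm_eq, Real.sqrt_eq_one]

theorem isCompact_setOf_sum_sq_eq_one (ι : Type*) [Fintype ι] :
    IsCompact {x : ι → ℝ | ∑ i, x i ^ 2 = 1} := by
  convert (isCompact_sphere (0 : EuclideanSpace ℝ ι) 1).image (PiLp.continuous_ofLp 2 _)
  ext x
  simp only [Set.mem_ofPred_eq, ← EuclideanSpace.norm_toLp_eq_one_iff, Set.mem_image,
    mem_sphere_zero_iff_norm]
  exact ⟨fun h => ⟨_, h, rfl⟩, by rintro ⟨v, hv, rfl⟩; exact hv⟩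

theorem exists_sum_sq_eq_one_smul_eq {ι : Type*} [Fintype ι] {x : ι → ℝ} (hx : x ≠ 0) :
    ∃ s : ℝ, ∃ u : ι → ℝ, ∑ i, u i ^ 2 = 1 ∧ x = s • u := by
  have hs : ‖toLp 2 x‖ ≠ 0 := by simpa using hx
  refine ⟨‖toLp 2 x‖, ‖toLp 2 x‖⁻¹ • x, ?_, ?_⟩
  · rw [← EuclideanSpace.norm_toLp_eq_one_iff, toLp_smul, norm_smul, norm_inv, norm_norm,
      inv_mul_cancel₀ hs]
  · rw [smul_inv_smul₀ hs]

theorem sum_sq_eq_dotProduct_self {ι : Type*} [Fintype ι] (x : ι → ℝ) :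
    ∑ i, x i ^ 2 = x ⬝ᵥ x := by
  simp only [dotProduct, sq]

namespace Matrix

variable {ι : Type*} [Fintype ι]

theorem dotProduct_add_transpose_mulVec (M : Matrix ι ι ℝ) (x : ι → ℝ) :
    x ⬝ᵥ (M + Mᵀ) *ᵥ x = 2 * (x ⬝ᵥ M *ᵥ x) := by
  rw [add_mulVec, dotProduct_add, mulVec_transpose, dotProduct_comm x (x ᵥ* M),
    ← dotProduct_mulVec, two_mul]

variable [DecidableEq ι]

theorem smul_one_sub_add_transpose_mulVec (a : ℝ) (M : Matrix ι ι ℝ) (x : ι → ℝ) :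
    (a • 1 - M + (a • 1 - M)ᵀ) *ᵥ x = (2 * a) • x - (M + Mᵀ) *ᵥ x := by
  rw [transpose_sub, transpose_smul, transpose_one,
    show a • 1 - M + (a • 1 - Mᵀ) = (2 * a) • (1 : Matrix ι ι ℝ) - (M + Mᵀ) by module,
    sub_mulVec, smul_mulVec, one_mulVec]

theorem IsSymm.mulVec_eq_smul_of_isMaxOn {S : Matrix ι ι ℝ} (hS : S.IsSymm) {x₀ : ι → ℝ}
    (hx₀ : ∑ i, x₀ i ^ 2 = 1)
    (hmax : IsMaxOn (fun x => x ⬝ᵥ S *ᵥ x) {x | ∑ i, x i ^ 2 = 1} x₀) :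
    S *ᵥ x₀ = (x₀ ⬝ᵥ S *ᵥ x₀) • x₀ := by
  set T := toEuclideanCLM (n := ι) (𝕜 := ℝ) S
  have hT : IsSelfAdjoint T := (isHermitian_iff_isSymm.mpr hS).isSelfAdjoint.map _
  have hre (x : EuclideanSpace ℝ ι) : T.reApplyInnerSelf x = ofLp x ⬝ᵥ S *ᵥ ofLp x := by
    rw [ContinuousLinearMap.reApplyInnerSelf_apply, RCLike.re_to_real, real_inner_comm,
      inner_toEuclideanCLM]
  have hx₀' : ‖toLp 2 x₀‖ = 1 := (EuclideanSpace.norm_toLp_eq_one_iff x₀).mpr hx₀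
  have hextr : IsLocalExtrOn T.reApplyInnerSelf (Metric.sphere 0 ‖toLp 2 x₀‖) (toLp 2 x₀) := by
    refine Or.inr (IsMaxOn.localize fun x hx => ?_)
    rw [hx₀', mem_sphere_zero_iff_norm, ← toLp_ofLp 2 x,
      EuclideanSpace.norm_toLp_eq_one_iff] at hx
    simpa only [Set.mem_ofPred_eq, hre] using hmax hx
  have := congrArg ofLp (hT.eq_smul_self_of_isLocalExtrOn_real hextr)
  simpa [T, ContinuousLinearMap.rayleighQuotient, hre, hx₀'] using this

theorem add_transpose_mulVec_eq_smul_of_isMaxOn {M : Matrix ι ι ℝ} {x₀ : ι → ℝ}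
    (hx₀ : ∑ i, x₀ i ^ 2 = 1)
    (hmax : IsMaxOn (fun x => x ⬝ᵥ M *ᵥ x) {x | ∑ i, x i ^ 2 = 1} x₀) :
    (M + Mᵀ) *ᵥ x₀ = (2 * (x₀ ⬝ᵥ M *ᵥ x₀)) • x₀ := by
  rw [← dotProduct_add_transpose_mulVec]
  refine (isSymm_add_transpose_self M).mulVec_eq_smul_of_isMaxOn hx₀ fun x hx => ?_
  simp only [Set.mem_ofPred_eq, dotProduct_add_transpose_mulVec]
  linarith [isMaxOn_iff.mp hmax x hx]

end Matrix

section Biquadratic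

variable {m n : ℕ}

def IsZBQTensor (A : Fin m → Fin n → Fin m → Fin n → ℝ) : Prop :=
  ∀ i1 j1 i2 j2, ¬(i1 = i2 ∧ j1 = j2) → A i1 j1 i2 j2 ≤ 0

/-- The matrix of the quadratic form `x ↦ bqForm A x y`. -/
def bqMatX (A : Fin m → Fin n → Fin m → Fin n → ℝ) (y : Fin n → ℝ) :
    Matrix (Fin m) (Fin m) ℝ :=
  fun i1 i2 => ∑ j1, ∑ j2, A i1 j1 i2 j2 * y j1 * y j2

/-- The matrix of the quadratic form `y ↦ bqForm A x y`. -/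
def bqMatY (A : Fin m → Fin n → Fin m → Fin n → ℝ) (x : Fin m → ℝ) :
    Matrix (Fin n) (Fin n) ℝ :=
  fun j1 j2 => ∑ i1, ∑ i2, A i1 j1 i2 j2 * x i1 * x i2

theorem bqForm_eq_dotProduct_bqMatX (A : Fin m → Fin n → Fin m → Fin n → ℝ)
    (x : Fin m → ℝ) (y : Fin n → ℝ) : bqForm A x y = x ⬝ᵥ bqMatX A y *ᵥ x := by
  simp only [bqForm, bqMatX, dotProduct, mulVec, Finset.sum_mul, Finset.mul_sum]
  refine Finset.sum_congr rfl fun i1 _ => ?_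
  rw [Finset.sum_comm]
  refine Finset.sum_congr rfl fun i2 _ => Finset.sum_congr rfl fun j1 _ =>
    Finset.sum_congr rfl fun j2 _ => by ring

theorem bqForm_eq_dotProduct_bqMatY (A : Fin m → Fin n → Fin m → Fin n → ℝ)
    (x : Fin m → ℝ) (y : Fin n → ℝ) : bqForm A x y = y ⬝ᵥ bqMatY A x *ᵥ y := by
  simp only [bqForm, bqMatY, dotProduct, mulVec, Finset.sum_mul, Finset.mul_sum]
  rw [Finset.sum_comm]
  refine Finset.sum_congr rfl fun j1 _ => ?_
  refine ((Finset.sum_congr rfl fun _ _ => Finset.sum_comm).trans Finset.sum_comm).trans ?_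
  exact Finset.sum_congr rfl fun j2 _ => Finset.sum_congr rfl fun i1 _ =>
    Finset.sum_congr rfl fun i2 _ => by ring

theorem bqMatX_add_transpose_mulVec_apply (A : Fin m → Fin n → Fin m → Fin n → ℝ)
    (x : Fin m → ℝ) (y : Fin n → ℝ) (i : Fin m) :
    ((bqMatX A y + (bqMatX A y)ᵀ) *ᵥ x) i =
      (∑ i1, ∑ j1, ∑ j2, A i1 j1 i j2 * x i1 * y j1 * y j2)
        + (∑ i2, ∑ j1, ∑ j2, A i j1 i2 j2 * y j1 * x i2 * y j2) := by
  simp only [mulVec, dotProduct, Matrix.add_apply, transpose_apply, bqMatX, add_mul,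
    Finset.sum_add_distrib, Finset.sum_mul]
  rw [add_comm]
  congr 1 <;> exact Finset.sum_congr rfl fun _ _ => Finset.sum_congr rfl fun _ _ =>
    Finset.sum_congr rfl fun _ _ => by ring

theorem bqMatY_add_transpose_mulVec_apply (A : Fin m → Fin n → Fin m → Fin n → ℝ)
    (x : Fin m → ℝ) (y : Fin n → ℝ) (j : Fin n) :
    ((bqMatY A x + (bqMatY A x)ᵀ) *ᵥ y) j =
      (∑ i1, ∑ i2, ∑ j1, A i1 j1 i2 j * x i1 * y j1 * x i2)
        + (∑ i1, ∑ i2, ∑ j2, A i1 j i2 j2 * x i1 * x i2 * y j2) := by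
  simp only [mulVec, dotProduct, Matrix.add_apply, transpose_apply, bqMatY, add_mul,
    Finset.sum_add_distrib, Finset.sum_mul]
  rw [add_comm]
  congr 1 <;>
  · refine (Finset.sum_comm.trans (Finset.sum_congr rfl fun _ _ => Finset.sum_comm)).trans ?_
    exact Finset.sum_congr rfl fun _ _ => Finset.sum_congr rfl fun _ _ =>
      Finset.sum_congr rfl fun _ _ => by ring

theorem isMEigenpair_iff {A : Fin m → Fin n → Fin m → Fin n → ℝ} {lam : ℝ}
    {x : Fin m → ℝ} {y : Fin n → ℝ} :
    IsMEigenpair A lam x y ↔ ∑ i, x i ^ 2 = 1 ∧ ∑ j, y j ^ 2 = 1 ∧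
      (bqMatX A y + (bqMatX A y)ᵀ) *ᵥ x = (2 * lam) • x ∧
      (bqMatY A x + (bqMatY A x)ᵀ) *ᵥ y = (2 * lam) • y := by
  simp only [IsMEigenpair, funext_iff, bqMatX_add_transpose_mulVec_apply,
    bqMatY_add_transpose_mulVec_apply, Pi.smul_apply, smul_eq_mul]

theorem bqMatX_eq_smul_one_sub {A B : Fin m → Fin n → Fin m → Fin n → ℝ} {c : ℝ}
    (hAB : ∀ i1 j1 i2 j2, A i1 j1 i2 j2 = c * bqId i1 j1 i2 j2 - B i1 j1 i2 j2)
    (y : Fin n → ℝ) : bqMatX A y = (c * ∑ j, y j ^ 2) • 1 - bqMatX B y := by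
  ext i1 i2
  by_cases h : i1 = i2 <;>
    simp [bqMatX, hAB, bqId, one_apply, h, sub_mul, Finset.sum_sub_distrib, Finset.mul_sum, sq,
      mul_assoc]

theorem bqMatY_eq_smul_one_sub {A B : Fin m → Fin n → Fin m → Fin n → ℝ} {c : ℝ}
    (hAB : ∀ i1 j1 i2 j2, A i1 j1 i2 j2 = c * bqId i1 j1 i2 j2 - B i1 j1 i2 j2)
    (x : Fin m → ℝ) : bqMatY A x = (c * ∑ i, x i ^ 2) • 1 - bqMatY B x := by
  ext j1 j2
  by_cases h : j1 = j2 <;>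
    simp [bqMatY, hAB, bqId, one_apply, h, sub_mul, Finset.sum_sub_distrib, Finset.mul_sum, sq,
      mul_assoc]

theorem bqForm_smul_left (A : Fin m → Fin n → Fin m → Fin n → ℝ) (c : ℝ)
    (x : Fin m → ℝ) (y : Fin n → ℝ) : bqForm A (c • x) y = c ^ 2 * bqForm A x y := by
  simp only [bqForm_eq_dotProduct_bqMatX, mulVec_smul, smul_dotProduct, dotProduct_smul,
    smul_eq_mul]
  ring

theorem bqForm_smul_right (A : Fin m → Fin n → Fin m → Fin n → ℝ) (c : ℝ)
    (x : Fin m → ℝ) (y : Fin n → ℝ) : bqForm A x (c • y) = c ^ 2 * bqForm A x y := by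
  simp only [bqForm_eq_dotProduct_bqMatY, mulVec_smul, smul_dotProduct, dotProduct_smul,
    smul_eq_mul]
  ring

theorem bqForm_nonneg_of_forall_sum_sq_eq_one {A : Fin m → Fin n → Fin m → Fin n → ℝ}
    (h : ∀ x y, ∑ i, x i ^ 2 = 1 → ∑ j, y j ^ 2 = 1 → 0 ≤ bqForm A x y)
    (x : Fin m → ℝ) (y : Fin n → ℝ) : 0 ≤ bqForm A x y := by
  rcases eq_or_ne x 0 with rfl | hx
  · simp [bqForm]
  rcases eq_or_ne y 0 with rfl | hy
  · simp [bqForm]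
  obtain ⟨s, u, hu, rfl⟩ := exists_sum_sq_eq_one_smul_eq hx
  obtain ⟨t, v, hv, rfl⟩ := exists_sum_sq_eq_one_smul_eq hy
  rw [bqForm_smul_left, bqForm_smul_right]
  exact mul_nonneg (sq_nonneg s) (mul_nonneg (sq_nonneg t) (h u v hu hv))

theorem bqForm_eq_smul_sub {A B : Fin m → Fin n → Fin m → Fin n → ℝ} {c : ℝ}
    (hAB : ∀ i1 j1 i2 j2, A i1 j1 i2 j2 = c * bqId i1 j1 i2 j2 - B i1 j1 i2 j2)
    (x : Fin m → ℝ) (y : Fin n → ℝ) :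
    bqForm A x y = c * (∑ i, x i ^ 2) * (∑ j, y j ^ 2) - bqForm B x y := by
  rw [bqForm_eq_dotProduct_bqMatX, bqMatX_eq_smul_one_sub hAB, sub_mulVec, dotProduct_sub,
    smul_mulVec, one_mulVec, dotProduct_smul, smul_eq_mul, ← bqForm_eq_dotProduct_bqMatX,
    sum_sq_eq_dotProduct_self x]
  ring

theorem IsMEigenpair.bqForm_eq {A : Fin m → Fin n → Fin m → Fin n → ℝ} {lam : ℝ}
    {x : Fin m → ℝ} {y : Fin n → ℝ} (h : IsMEigenpair A lam x y) : bqForm A x y = lam := by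
  obtain ⟨hx, -, hX, -⟩ := isMEigenpair_iff.mp h
  have := congrArg (x ⬝ᵥ ·) hX
  simp only [dotProduct_add_transpose_mulVec, dotProduct_smul, smul_eq_mul,
    ← sum_sq_eq_dotProduct_self, hx] at this
  rw [bqForm_eq_dotProduct_bqMatX]
  linarith

theorem IsMEigenpair.of_eq_smul_bqId_sub {A B : Fin m → Fin n → Fin m → Fin n → ℝ} {c mu : ℝ}
    (hAB : ∀ i1 j1 i2 j2, A i1 j1 i2 j2 = c * bqId i1 j1 i2 j2 - B i1 j1 i2 j2)
    {x : Fin m → ℝ} {y : Fin n → ℝ} (h : IsMEigenpair B mu x y) :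
    IsMEigenpair A (c - mu) x y := by
  obtain ⟨hx, hy, hX, hY⟩ := isMEigenpair_iff.mp h
  refine isMEigenpair_iff.mpr ⟨hx, hy, ?_, ?_⟩
  · rw [bqMatX_eq_smul_one_sub hAB, hy, mul_one, smul_one_sub_add_transpose_mulVec, hX,
      ← sub_smul, mul_sub]
  · rw [bqMatY_eq_smul_one_sub hAB, hx, mul_one, smul_one_sub_add_transpose_mulVec, hY,
      ← sub_smul, mul_sub]

theorem exists_isMEigenvalue_ge (A : Fin m → Fin n → Fin m → Fin n → ℝ) {x : Fin m → ℝ}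
    {y : Fin n → ℝ} (hx : ∑ i, x i ^ 2 = 1) (hy : ∑ j, y j ^ 2 = 1) :
    ∃ mu, IsMEigenvalue A mu ∧ bqForm A x y ≤ mu := by
  have hcont : Continuous fun p : (Fin m → ℝ) × (Fin n → ℝ) => bqForm A p.1 p.2 := by
    unfold bqForm
    fun_prop
  obtain ⟨⟨x₀, y₀⟩, ⟨hx₀, hy₀⟩, hmax⟩ :=
    ((isCompact_setOf_sum_sq_eq_one _).prod (isCompact_setOf_sum_sq_eq_one _)).exists_isMaxOn
      ⟨(x, y), hx, hy⟩ hcont.continuousOn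
  have hle (x' : Fin m → ℝ) (y' : Fin n → ℝ) (hx' : ∑ i, x' i ^ 2 = 1)
      (hy' : ∑ j, y' j ^ 2 = 1) : bqForm A x' y' ≤ bqForm A x₀ y₀ :=
    isMaxOn_iff.mp hmax (x', y') ⟨hx', hy'⟩
  refine ⟨bqForm A x₀ y₀, ⟨x₀, y₀, isMEigenpair_iff.mpr ⟨hx₀, hy₀, ?_, ?_⟩⟩, hle x y hx hy⟩
  · rw [add_transpose_mulVec_eq_smul_of_isMaxOn hx₀, ← bqForm_eq_dotProduct_bqMatX]
    refine isMaxOn_iff.mpr fun x' hx' => ?_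
    simpa only [← bqForm_eq_dotProduct_bqMatX] using hle x' y₀ hx' hy₀
  · rw [add_transpose_mulVec_eq_smul_of_isMaxOn hy₀, ← bqForm_eq_dotProduct_bqMatY]
    refine isMaxOn_iff.mpr fun y' hy' => ?_
    simpa only [← bqForm_eq_dotProduct_bqMatY] using hle x₀ y' hx₀ hy'

theorem IsZBQTensor.exists_nonneg_eq_smul_bqId_sub {A : Fin m → Fin n → Fin m → Fin n → ℝ}
    (hZ : IsZBQTensor A) :
    ∃ (γ : ℝ) (B : Fin m → Fin n → Fin m → Fin n → ℝ), (∀ i1 j1 i2 j2, 0 ≤ B i1 j1 i2 j2) ∧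
      ∀ i1 j1 i2 j2, A i1 j1 i2 j2 = γ * bqId i1 j1 i2 j2 - B i1 j1 i2 j2 := by
  obtain ⟨γ, hγ⟩ := (Set.finite_range fun p : Fin m × Fin n => A p.1 p.2 p.1 p.2).bddAbove
  refine ⟨γ, fun i1 j1 i2 j2 => γ * bqId i1 j1 i2 j2 - A i1 j1 i2 j2,
    fun i1 j1 i2 j2 => ?_, fun _ _ _ _ => by ring⟩
  by_cases h : i1 = i2 ∧ j1 = j2
  · obtain ⟨rfl, rfl⟩ := h
    simpa [bqId] using hγ ⟨(i1, j1), rfl⟩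
  · simpa [bqId, h] using hZ i1 j1 i2 j2 h

theorem BQPosSemidef.isMBQTensor {A : Fin m → Fin n → Fin m → Fin n → ℝ} (hZ : IsZBQTensor A)
    (h : BQPosSemidef A) : IsMBQTensor A := by
  obtain ⟨γ, B, hB, hAB⟩ := hZ.exists_nonneg_eq_smul_bqId_sub
  refine ⟨γ, B, hB, hAB, fun mu ⟨x, y, hxy⟩ => ?_⟩
  have := (hxy.of_eq_smul_bqId_sub hAB).bqForm_eq
  linarith [h x y]

theorem BQPosDef.isStrongMBQTensor {A : Fin m → Fin n → Fin m → Fin n → ℝ}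
    (hZ : IsZBQTensor A) (h : BQPosDef A) : IsStrongMBQTensor A := by
  obtain ⟨γ, B, hB, hAB⟩ := hZ.exists_nonneg_eq_smul_bqId_sub
  refine ⟨γ, B, hB, hAB, fun mu ⟨x, y, hxy⟩ => ?_⟩
  have := (hxy.of_eq_smul_bqId_sub hAB).bqForm_eq
  linarith [h x y hxy.1 hxy.2.1]

theorem IsMBQTensor.bqPosSemidef {A : Fin m → Fin n → Fin m → Fin n → ℝ}
    (h : IsMBQTensor A) : BQPosSemidef A := by
  obtain ⟨α, B, -, hAB, hα⟩ := h
  refine bqForm_nonneg_of_forall_sum_sq_eq_one fun x y hx hy => ?_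
  obtain ⟨mu, hmu, hle⟩ := exists_isMEigenvalue_ge B hx hy
  rw [bqForm_eq_smul_sub hAB, hx, hy]
  linarith [hα mu hmu]

theorem IsStrongMBQTensor.bqPosDef {A : Fin m → Fin n → Fin m → Fin n → ℝ}
    (h : IsStrongMBQTensor A) : BQPosDef A := by
  obtain ⟨α, B, -, hAB, hα⟩ := h
  intro x y hx hy
  obtain ⟨mu, hmu, hle⟩ := exists_isMEigenvalue_ge B hx hy
  rw [bqForm_eq_smul_sub hAB, hx, hy]
  linarith [hα mu hmu]

end Biquadratic

theorem zbq_posSemidef_iff_M_general {m n : ℕ}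
    (A : Fin m → Fin n → Fin m → Fin n → ℝ)
    (hZ : ∀ i1 j1 i2 j2, ¬(i1 = i2 ∧ j1 = j2) → A i1 j1 i2 j2 ≤ 0) :
    (BQPosSemidef A ↔ IsMBQTensor A) ∧ (BQPosDef A ↔ IsStrongMBQTensor A) :=
  ⟨⟨BQPosSemidef.isMBQTensor hZ, IsMBQTensor.bqPosSemidef⟩,
    ⟨BQPosDef.isStrongMBQTensor hZ, IsStrongMBQTensor.bqPosDef⟩⟩

/-- A Z-biquadratic tensor is positive semi-definite iff it is an M-biquadratic tensor,
and positive definite iff it is a strong M-biquadratic tensor. -/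
theorem zbq_posSemidef_iff_M {m n : ℕ} (hm : 2 ≤ m) (hn : 2 ≤ n)
    (A : Fin m → Fin n → Fin m → Fin n → ℝ)
    (hZ : ∀ i1 j1 i2 j2, ¬(i1 = i2 ∧ j1 = j2) → A i1 j1 i2 j2 ≤ 0) :
    (BQPosSemidef A ↔ IsMBQTensor A) ∧ (BQPosDef A ↔ IsStrongMBQTensor A) :=
  zbq_posSemidef_iff_M_general A hZ
end
end
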